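/- arXiv:2112.05010 — 6 statements merged into one kernel-verified Lean document; each statement's English description precedes it below -/
import Mathlib

section
/- Suppose the past assortments are nested with S_M = N₀, let η ≥ 0, assume the uncertainty set U_η is nonempty, and let S ⊆ N₀ satisfy S ∩ S_1 ≠ ∅. Then inf_{λ ∈ U_η} R^λ(S) equals the infimum of Σ_{(i,κ) : (M,i,κ) ∈ 𝔙} κ·g(M,i,κ) over all functions f : 𝔈 → ℝ and g : 𝔙 → ℝ satisfying: f ≥ 0 and g ≥ 0; |Σ_{κ : (m,i,κ) ∈ 𝔙} g(m,i,κ) − v_{m,i}| ≤ η for every m ∈ {1,…,M} and every i ∈ S_m; Σ_{(i′,κ′) : ((m,i,κ),(m+1,i′,κ′)) ∈ 𝔈} f((m,i,κ),(m+1,i′,κ′)) = g(m,i,κ) for every (m,i,κ) ∈ 𝔙 with m ∈ {1,…,M−1}; Σ_{(i′,κ′) : ((m−1,i′,κ′),(m,i,κ)) ∈ 𝔈} f((m−1,i′,κ′),(m,i,κ)) = g(m,i,κ) for every (m,i,κ) ∈ 𝔙 with m ∈ {2,…,M}; g(m,i,κ) = 0 for every (m,i,κ) ∈ 𝔙 with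 i ∈ S, i ∈ B_m and κ ≠ r(i); g(m,i,κ) = 0 for every (m,i,κ) ∈ 𝔙 with i ∈ S, i ∉ B_m and κ ∈ {r(j) : j ∈ B_m}; g(m,i,κ) = 0 for every (m,i,κ) ∈ 𝔙 with κ ∈ {r(j) : j ∈ B_m \ S}; and Σ_{(i,κ) : (M,i,κ) ∈ 𝔙} g(M,i,κ) = 1. -/
/-!
Both sides are infima over the same set of values. A ranking `σ` traces the path
`m ↦ (top of S_m, top of S ∩ S_m)` through the layered network, so a choice model `λ` pushes
forward to a distribution on paths whose one- and two-layer marginals form a feasible flow with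
objective `R^λ(S)`.

Conversely, a feasible flow `(f, g)` is the marginal of the Markov chain with transitions
`f / g`. Every path this chain charges is forced by the support constraints to be *good*
(`IsGoodPath`), and every good path is traced by some ranking: sort the products by a priority
recording the last layer at which a product is the top of `S_m`, and otherwise the first layer at
which it is the top of `S ∩ S_m`. Lifting the path distribution along this section gives
`λ ∈ U_η` with `R^λ(S)` equal to the objective of the flow.
-/

namespace RobustAssortment

/-- `i` is the most preferred product of the assortment `S` under the ranking `σ`. -/
def isTop {n : ℕ} (σ : Equiv.Perm (Fin (n + 1))) (S : Finset (Fin (n + 1)))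
    (i : Fin (n + 1)) : Prop :=
  i ∈ S ∧ ∀ j ∈ S, σ i ≤ σ j

instance {n : ℕ} (σ : Equiv.Perm (Fin (n + 1))) (S : Finset (Fin (n + 1)))
    (i : Fin (n + 1)) : Decidable (isTop σ S i) := by
  unfold isTop; infer_instance
/-- A ranking-based choice model: nonnegative weights on rankings summing to one. -/
def IsChoiceModel {n : ℕ} (lam : Equiv.Perm (Fin (n + 1)) → ℝ) : Prop :=
  (∀ σ, 0 ≤ lam σ) ∧ ∑ σ : Equiv.Perm (Fin (n + 1)), lam σ = 1

/-- Choice probability `D^λ_i(S)`. -/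
noncomputable def choiceProb {n : ℕ} (lam : Equiv.Perm (Fin (n + 1)) → ℝ)
    (S : Finset (Fin (n + 1))) (i : Fin (n + 1)) : ℝ :=
  ∑ σ : Equiv.Perm (Fin (n + 1)), if isTop σ S i then lam σ else 0

/-- Expected revenue `R^λ(S)`. -/
noncomputable def expRev {n : ℕ} (r : Fin (n + 1) → ℝ)
    (lam : Equiv.Perm (Fin (n + 1)) → ℝ) (S : Finset (Fin (n + 1))) : ℝ :=
  ∑ i ∈ S, r i * choiceProb lam S i

/-- The uncertainty set `U_η` of choice models consistent with the sales data. -/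
def Uset {n M : ℕ} (Sm : Fin M → Finset (Fin (n + 1)))
    (v : Fin M → Fin (n + 1) → ℝ) (η : ℝ) :
    Set (Equiv.Perm (Fin (n + 1)) → ℝ) :=
  {lam | IsChoiceModel lam ∧
    ∀ m : Fin M, ∀ i ∈ Sm m, |choiceProb lam (Sm m) i - v m i| ≤ η}

/-- Worst-case expected revenue `inf_{λ ∈ U_η} R^λ(S)`. -/
noncomputable def wcRev {n M : ℕ} (Sm : Fin M → Finset (Fin (n + 1)))
    (v : Fin M → Fin (n + 1) → ℝ) (η : ℝ) (r : Fin (n + 1) → ℝ)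
    (S : Finset (Fin (n + 1))) : ℝ :=
  sInf {x | ∃ lam ∈ Uset Sm v η, x = expRev r lam S}

/-- The set `B_m`: products appearing in `S_m` but in no earlier past assortment.
(For nested assortments, `B_1 = S_1` and `B_m = S_m \ S_{m-1}` for `m ≥ 2`.) -/
def Bm {n M : ℕ} (Sm : Fin M → Finset (Fin (n + 1))) (m : Fin M) :
    Finset (Fin (n + 1)) :=
  if (m : ℕ) = 0 then Sm m
  else Sm m \ Sm ⟨(m : ℕ) - 1, lt_of_le_of_lt (Nat.sub_le _ _) m.isLt⟩

/-- Vertex membership in `𝔙`: the vertex `(m, i, κ)` with `κ = r k` is in `𝔙` iff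
`i ∈ S_m` and `k ∈ S_m` (so that `κ ∈ {r j : j ∈ S_m}`). -/
def Vmem {n M : ℕ} (Sm : Fin M → Finset (Fin (n + 1))) (m : Fin M)
    (i k : Fin (n + 1)) : Prop :=
  i ∈ Sm m ∧ k ∈ Sm m

/-- Edge membership in `𝔈`: a directed edge from vertex `(m, i, r k)` to
vertex `(m', i', r k')` with `m' = m + 1`, `i' ∈ {i} ∪ B_{m+1}` and
`r k' ∈ {r k} ∪ {r j : j ∈ B_{m+1}}`. -/
def Emem {n M : ℕ} (Sm : Fin M → Finset (Fin (n + 1))) (r : Fin (n + 1) → ℝ)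
    (m : Fin M) (i k : Fin (n + 1)) (m' : Fin M) (i' k' : Fin (n + 1)) : Prop :=
  Vmem Sm m i k ∧ Vmem Sm m' i' k' ∧ (m' : ℕ) = (m : ℕ) + 1 ∧
    (i' = i ∨ i' ∈ Bm Sm m') ∧ (r k' = r k ∨ ∃ j ∈ Bm Sm m', r k' = r j)

attribute [local instance] Classical.propDecidable

section PushWeight

variable {α β : Type*} [Fintype α]

noncomputable def pushWeight (h : α → β) (w : α → ℝ) (b : β) : ℝ :=
  ∑ a with h a = b, w a

lemma pushWeight_nonneg {h : α → β} {w : α → ℝ} (hw : ∀ a, 0 ≤ w a) (b : β) :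
    0 ≤ pushWeight h w b :=
  Finset.sum_nonneg fun a _ => hw a

lemma exists_eq_of_pushWeight_ne_zero {h : α → β} {w : α → ℝ} {b : β}
    (hb : pushWeight h w b ≠ 0) : ∃ a, h a = b := by
  obtain ⟨a, ha, -⟩ := Finset.exists_ne_zero_of_sum_ne_zero hb
  exact ⟨a, (Finset.mem_filter.mp ha).2⟩

lemma sum_pushWeight_mul [Fintype β] (h : α → β) (w : α → ℝ) (A : β → ℝ) :
    ∑ b, pushWeight h w b * A b = ∑ a, w a * A (h a) := by
  simp_rw [pushWeight, Finset.sum_mul]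
  rw [← Finset.sum_fiberwise Finset.univ h (fun a => w a * A (h a))]
  refine Finset.sum_congr rfl fun b _ => Finset.sum_congr rfl fun a ha => ?_
  rw [(Finset.mem_filter.mp ha).2]

lemma pushWeight_comp {γ : Type*} [Fintype β] (g : β → γ) (h : α → β)
    (w : α → ℝ) : pushWeight g (pushWeight h w) = pushWeight (g ∘ h) w := by
  ext c
  rw [pushWeight, pushWeight, ← Finset.sum_fiberwise_of_maps_to (g := h)
    (t := Finset.univ.filter fun b => g b = c) (fun a ha => by simpa using ha)]
  refine Finset.sum_congr rfl fun b hb => Finset.sum_congr ?_ fun _ _ => rfl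
  ext a
  simp only [Finset.mem_filter, Finset.mem_univ, true_and, Function.comp_apply] at hb ⊢
  exact ⟨fun e => ⟨e ▸ hb, e⟩, And.right⟩

lemma sum_pushWeight_mk_left {γ : Type*} [Fintype β] [Fintype γ] (h : α → β × γ)
    (w : α → ℝ) (b : β) : ∑ c, pushWeight h w (b, c) = pushWeight (fun a => (h a).1) w b := by
  rw [← Function.comp_def Prod.fst h, ← pushWeight_comp, pushWeight, Finset.sum_filter,
    Fintype.sum_prod_type, Fintype.sum_eq_single b fun x hx => by simp [hx]]
  simp

lemma sum_pushWeight_mk_right {γ : Type*} [Fintype β] [Fintype γ] (h : α → β × γ)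
    (w : α → ℝ) (c : γ) : ∑ b, pushWeight h w (b, c) = pushWeight (fun a => (h a).2) w c := by
  rw [← Function.comp_def Prod.snd h, ← pushWeight_comp, pushWeight, Finset.sum_filter,
    Fintype.sum_prod_type_right, Fintype.sum_eq_single c fun x hx => by simp [hx]]
  simp

lemma exists_pushWeight_eq [Nonempty α] [Fintype β] {h : α → β} {w : β → ℝ}
    (hw : ∀ b, 0 ≤ w b) (hrange : ∀ b, w b ≠ 0 → ∃ a, h a = b) :
    ∃ lam : α → ℝ, (∀ a, 0 ≤ lam a) ∧ pushWeight h lam = w := by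
  refine ⟨pushWeight (Function.invFun h) w, pushWeight_nonneg hw, ?_⟩
  ext c
  rw [pushWeight_comp, pushWeight, Finset.sum_eq_single c]
  · intro b hb hbc
    by_contra hwb
    exact hbc ((Function.invFun_eq (hrange b hwb)).symm.trans (Finset.mem_filter.mp hb).2)
  · intro hc
    by_contra hwc
    exact hc (Finset.mem_filter.mpr ⟨Finset.mem_univ c, Function.invFun_eq (hrange c hwc)⟩)

end PushWeight

section FlowDecomposition

variable {V : Type*}

/-- The law of the Markov chain with initial weights `g 0` and transitions `f m x y / g m x`.
Where `g m x = 0` the division returns `0`, which is harmless: `f m x ·` vanishes there too. -/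
noncomputable def pathWeight {N : ℕ} (g : Fin (N + 1) → V → ℝ) (f : Fin N → V → V → ℝ)
    (p : Fin (N + 1) → V) : ℝ :=
  g 0 (p 0) * ∏ m : Fin N, f m (p m.castSucc) (p m.succ) / g m.castSucc (p m.castSucc)

lemma pathWeight_snoc {N : ℕ} (g : Fin (N + 2) → V → ℝ) (f : Fin (N + 1) → V → V → ℝ)
    (q : Fin (N + 1) → V) (y : V) :
    pathWeight g f (Fin.snoc q y) =
      pathWeight (fun m => g m.castSucc) (fun m => f m.castSucc) q *
        (f (Fin.last N) (q (Fin.last N)) y / g (Fin.last N).castSucc (q (Fin.last N))) := by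
  have h0 : (Fin.snoc q y : Fin (N + 2) → V) 0 = q 0 :=
    Fin.snoc_castSucc (α := fun _ => V) (p := q) (x := y) (i := 0)
  simp only [pathWeight, Fin.prod_univ_castSucc, h0, Fin.snoc_castSucc, Fin.succ_castSucc,
    Fin.succ_last, Fin.snoc_last, mul_assoc, Fin.castSucc_zero]

lemma f_ne_zero_of_pathWeight_ne_zero {N : ℕ} {g : Fin (N + 1) → V → ℝ}
    {f : Fin N → V → V → ℝ} {p : Fin (N + 1) → V} (hp : pathWeight g f p ≠ 0) (m : Fin N) :
    f m (p m.castSucc) (p m.succ) ≠ 0 := by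
  intro h0
  apply hp
  rw [pathWeight, Finset.prod_eq_zero (Finset.mem_univ m) (by rw [h0, zero_div]), mul_zero]

variable [Fintype V]

structure IsFlow {N : ℕ} (g : Fin (N + 1) → V → ℝ) (f : Fin N → V → V → ℝ) : Prop where
  g_nonneg : ∀ m x, 0 ≤ g m x
  f_nonneg : ∀ m x y, 0 ≤ f m x y
  sum_out : ∀ m x, ∑ y, f m x y = g m.castSucc x
  sum_in : ∀ m y, ∑ x, f m x y = g m.succ y

lemma sum_eq_sum_sum_snoc {N : ℕ} (F : (Fin (N + 2) → V) → ℝ) :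
    ∑ p, F p = ∑ q : Fin (N + 1) → V, ∑ y, F (Fin.snoc q y) := by
  rw [← (Fin.snocEquiv fun _ => V).sum_comp, Fintype.sum_prod_type, Finset.sum_comm]
  rfl

namespace IsFlow

variable {N : ℕ} {g : Fin (N + 1) → V → ℝ} {f : Fin N → V → V → ℝ}

lemma castSucc {g : Fin (N + 2) → V → ℝ} {f : Fin (N + 1) → V → V → ℝ} (hf : IsFlow g f) :
    IsFlow (fun m => g m.castSucc) (fun m => f m.castSucc) where
  g_nonneg m := hf.g_nonneg m.castSucc
  f_nonneg m := hf.f_nonneg m.castSucc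
  sum_out m := hf.sum_out m.castSucc
  sum_in m := hf.sum_in m.castSucc

lemma f_eq_zero_of_left (hf : IsFlow g f) {m : Fin N} {x : V} (h : g m.castSucc x = 0) (y : V) :
    f m x y = 0 :=
  (Finset.sum_eq_zero_iff_of_nonneg fun y _ => hf.f_nonneg m x y).mp
    ((hf.sum_out m x).trans h) y (Finset.mem_univ y)

lemma f_eq_zero_of_right (hf : IsFlow g f) {m : Fin N} {y : V} (h : g m.succ y = 0) (x : V) :
    f m x y = 0 :=
  (Finset.sum_eq_zero_iff_of_nonneg fun x _ => hf.f_nonneg m x y).mp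
    ((hf.sum_in m y).trans h) x (Finset.mem_univ x)

lemma g_mul_f_div_g (hf : IsFlow g f) (m : Fin N) (x y : V) :
    g m.castSucc x * (f m x y / g m.castSucc x) = f m x y := by
  by_cases h : g m.castSucc x = 0
  · rw [h, zero_mul, hf.f_eq_zero_of_left h]
  · exact mul_div_cancel₀ _ h

lemma pathWeight_nonneg (hf : IsFlow g f) (p : Fin (N + 1) → V) : 0 ≤ pathWeight g f p :=
  mul_nonneg (hf.g_nonneg 0 _)
    (Finset.prod_nonneg fun m _ => div_nonneg (hf.f_nonneg m _ _) (hf.g_nonneg _ _))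

lemma g_last_ne_zero (hf : IsFlow g f) {p : Fin (N + 1) → V} (hp : pathWeight g f p ≠ 0) :
    g (Fin.last N) (p (Fin.last N)) ≠ 0 := by
  cases N with
  | zero => simpa [pathWeight] using hp
  | succ N =>
    rw [← Fin.snoc_init_self p, pathWeight_snoc] at hp
    intro h
    apply hp
    rw [hf.f_eq_zero_of_right (m := Fin.last N) (by simpa using h), zero_div, mul_zero]

lemma sum_pathWeight_snoc {g : Fin (N + 2) → V → ℝ} {f : Fin (N + 1) → V → V → ℝ}
    (hf : IsFlow g f) (q : Fin (N + 1) → V) :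
    ∑ y, pathWeight g f (Fin.snoc q y) =
      pathWeight (fun m => g m.castSucc) (fun m => f m.castSucc) q := by
  simp_rw [pathWeight_snoc, ← Finset.mul_sum, ← Finset.sum_div, hf.sum_out]
  by_cases hq : pathWeight (fun m => g m.castSucc) (fun m => f m.castSucc) q = 0
  · rw [hq, zero_mul]
  · rw [div_self (hf.castSucc.g_last_ne_zero hq), mul_one]

theorem sum_pathWeight_mul (hf : IsFlow g f) (m : Fin (N + 1)) (χ : V → ℝ) :
    ∑ p, pathWeight g f p * χ (p m) = ∑ x, g m x * χ x := by
  induction N generalizing χ with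
  | zero =>
    obtain rfl : m = 0 := Fin.fin_one_eq_zero m
    rw [← (Equiv.funUnique (Fin 1) V).symm.sum_comp]
    simp [pathWeight]
  | succ N ih =>
    rw [sum_eq_sum_sum_snoc]
    induction m using Fin.lastCases with
    | last =>
      simp_rw [Fin.snoc_last, pathWeight_snoc, mul_assoc, ← Finset.mul_sum]
      rw [ih hf.castSucc (Fin.last N)
        fun x => ∑ y, f (Fin.last N) x y / g (Fin.last N).castSucc x * χ y]
      simp_rw [Finset.mul_sum, ← mul_assoc, hf.g_mul_f_div_g]
      rw [Finset.sum_comm]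
      simp_rw [← Finset.sum_mul, hf.sum_in, Fin.succ_last]
    | cast m =>
      simp_rw [Fin.snoc_castSucc, ← Finset.sum_mul, hf.sum_pathWeight_snoc]
      exact ih hf.castSucc m χ

lemma g_ne_zero_of_pathWeight_ne_zero (hf : IsFlow g f) {p : Fin (N + 1) → V}
    (hp : pathWeight g f p ≠ 0) (m : Fin (N + 1)) : g m (p m) ≠ 0 := by
  intro h0
  have hsum := hf.sum_pathWeight_mul m fun x => if x = p m then 1 else 0
  simp only [mul_ite, mul_one, mul_zero, Finset.sum_ite_eq', Finset.mem_univ, if_true, h0]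
    at hsum
  have hp0 := (Finset.sum_eq_zero_iff_of_nonneg fun q _ => ?_).mp hsum p (Finset.mem_univ p)
  · exact hp (by simpa using hp0)
  · split_ifs
    exacts [hf.pathWeight_nonneg q, le_rfl]

end IsFlow

end FlowDecomposition

section Rankings

variable {n : ℕ} {σ : Equiv.Perm (Fin (n + 1))} {T T' : Finset (Fin (n + 1))} {i j : Fin (n + 1)}

lemma isTop_unique (hi : isTop σ T i) (hj : isTop σ T j) : i = j :=
  σ.injective (le_antisymm (hi.2 j hj.1) (hj.2 i hi.1))

noncomputable def topOf (σ : Equiv.Perm (Fin (n + 1))) (T : Finset (Fin (n + 1))) : Fin (n + 1) :=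
  if h : ∃ i, isTop σ T i then h.choose else 0

lemma isTop_topOf (hT : T.Nonempty) : isTop σ T (topOf σ T) := by
  have h : ∃ i, isTop σ T i := by
    obtain ⟨i, hi, hmin⟩ := T.exists_min_image σ hT
    exact ⟨i, hi, hmin⟩
  rw [topOf, dif_pos h]
  exact h.choose_spec

lemma topOf_mem (hT : T.Nonempty) : topOf σ T ∈ T :=
  (isTop_topOf hT).1

lemma isTop_iff_topOf_eq (hT : T.Nonempty) : isTop σ T i ↔ topOf σ T = i :=
  ⟨isTop_unique (isTop_topOf hT), fun h => h ▸ isTop_topOf hT⟩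

lemma topOf_eq_of_subset (hT : T.Nonempty) (hsub : T ⊆ T') (hmem : topOf σ T' ∈ T) :
    topOf σ T' = topOf σ T :=
  ((isTop_iff_topOf_eq hT).mp ⟨hmem, fun j hj => (isTop_topOf (hT.mono hsub)).2 j (hsub hj)⟩).symm

lemma choiceProb_eq_pushWeight (lam : Equiv.Perm (Fin (n + 1)) → ℝ) (hT : T.Nonempty) :
    choiceProb lam T i = pushWeight (topOf · T) lam i := by
  rw [choiceProb, pushWeight, Finset.sum_filter]
  congr! 2 with σ
  exact isTop_iff_topOf_eq hT

lemma choiceProb_eq_sum_mul_ite (lam : Equiv.Perm (Fin (n + 1)) → ℝ) (hT : T.Nonempty) :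
    choiceProb lam T i = ∑ σ, lam σ * if topOf σ T = i then 1 else 0 := by
  refine Finset.sum_congr rfl fun σ _ => ?_
  by_cases h : topOf σ T = i
  · rw [if_pos ((isTop_iff_topOf_eq hT).mpr h), if_pos h, mul_one]
  · rw [if_neg (mt (isTop_iff_topOf_eq hT).mp h), if_neg h, mul_zero]

lemma expRev_eq_sum_topOf (r : Fin (n + 1) → ℝ) (lam : Equiv.Perm (Fin (n + 1)) → ℝ)
    (hT : T.Nonempty) : expRev r lam T = ∑ σ, lam σ * r (topOf σ T) := by
  simp_rw [expRev, choiceProb_eq_pushWeight lam hT, mul_comm (r _)]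
  rw [← sum_pushWeight_mul, Finset.sum_subset (Finset.subset_univ T)]
  intro i _ hi
  by_contra h
  obtain ⟨σ, rfl⟩ := exists_eq_of_pushWeight_ne_zero (left_ne_zero_of_mul h)
  exact hi (topOf_mem hT)

lemma exists_perm_le_iff {k : ℕ} {β : Type*} [LinearOrder β] {key : Fin k → β}
    (hkey : Function.Injective key) :
    ∃ σ : Equiv.Perm (Fin k), ∀ a b, σ a ≤ σ b ↔ key a ≤ key b := by
  have hsort : StrictMono (key ∘ Tuple.sort key) :=
    (Tuple.monotone_sort key).strictMono_of_injective (hkey.comp (Tuple.sort key).injective)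
  refine ⟨(Tuple.sort key).symm, fun a b => ?_⟩
  rw [← hsort.le_iff_le]
  simp

noncomputable def topPath {N : ℕ} (Sm : Fin (N + 1) → Finset (Fin (n + 1)))
    (S : Finset (Fin (n + 1))) (σ : Equiv.Perm (Fin (n + 1))) (m : Fin (N + 1)) :
    Fin (n + 1) × Fin (n + 1) :=
  (topOf σ (Sm m), topOf σ (S ∩ Sm m))

end Rankings

section GoodPaths

variable {α : Type*} {N : ℕ} {Sm : Fin (N + 1) → Finset α}

lemma eq_of_mem_of_le (hSm : Monotone Sm) {x : Fin (N + 1) → α}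
    (hx : ∀ m : Fin N, x m.succ = x m.castSucc ∨ x m.succ ∉ Sm m.castSucc)
    {a b : Fin (N + 1)} (hab : a ≤ b) (hb : x b ∈ Sm a) : x b = x a := by
  induction b using Fin.induction with
  | zero => rw [Fin.le_zero_iff.mp hab]
  | succ b ih =>
    rcases hab.lt_or_eq with hlt | rfl
    · have hab' : a ≤ b.castSucc := Fin.le_castSucc_iff.mpr hlt
      rcases hx b with h | h
      · rw [h] at hb ⊢
        exact ih hab' hb
      · exact absurd (hSm hab' hb) h
    · rfl

variable [DecidableEq α] (Sm) (S : Finset α)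

structure IsGoodPath (p : Fin (N + 1) → α × α) : Prop where
  fst_mem : ∀ m, (p m).1 ∈ Sm m
  snd_mem : ∀ m, (p m).2 ∈ S ∩ Sm m
  fst_succ : ∀ m : Fin N, (p m.succ).1 = (p m.castSucc).1 ∨ (p m.succ).1 ∉ Sm m.castSucc
  snd_succ : ∀ m : Fin N, (p m.succ).2 = (p m.castSucc).2 ∨ (p m.succ).2 ∉ Sm m.castSucc
  snd_eq_fst : ∀ m, (p m).1 ∈ S → (p m).2 = (p m).1

variable {Sm S} {p : Fin (N + 1) → α × α}

lemma IsGoodPath.fst_eq_of_mem (hp : IsGoodPath Sm S p) (hSm : Monotone Sm) {a b : Fin (N + 1)}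
    (hab : a ≤ b) (hb : (p b).1 ∈ Sm a) : (p b).1 = (p a).1 :=
  eq_of_mem_of_le (x := fun m => (p m).1) hSm hp.fst_succ hab hb

lemma IsGoodPath.snd_eq_of_mem (hp : IsGoodPath Sm S p) (hSm : Monotone Sm) {a b : Fin (N + 1)}
    (hab : a ≤ b) (hb : (p b).2 ∈ Sm a) : (p b).2 = (p a).2 :=
  eq_of_mem_of_le (x := fun m => (p m).2) hSm hp.snd_succ hab hb

end GoodPaths

section Realization

variable {α : Type*} {N : ℕ} {p : Fin (N + 1) → α × α} {m : Fin (N + 1)} {j : α}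

noncomputable def lastFstLevel (p : Fin (N + 1) → α × α) (j : α) : Fin (N + 1) :=
  (Finset.univ.filter fun m => (p m).1 = j).sup id

noncomputable def firstSndLevel (p : Fin (N + 1) → α × α) (j : α) : Fin (N + 1) :=
  (Finset.univ.filter fun m => (p m).2 = j).inf id

lemma le_lastFstLevel (h : (p m).1 = j) : m ≤ lastFstLevel p j := by
  rw [lastFstLevel]
  exact Finset.le_sup (f := id) (by simpa using h)

lemma fst_lastFstLevel (h : (p m).1 = j) : (p (lastFstLevel p j)).1 = j := by
  obtain ⟨a, ha, he⟩ :=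
    Finset.exists_mem_eq_sup (Finset.univ.filter fun m => (p m).1 = j) ⟨m, by simpa using h⟩ id
  rw [lastFstLevel, he]
  exact (Finset.mem_filter.mp ha).2

lemma firstSndLevel_le (h : (p m).2 = j) : firstSndLevel p j ≤ m := by
  rw [firstSndLevel]
  exact Finset.inf_le (f := id) (by simpa using h)

lemma snd_firstSndLevel (h : (p m).2 = j) : (p (firstSndLevel p j)).2 = j := by
  obtain ⟨a, ha, he⟩ :=
    Finset.exists_mem_eq_inf (Finset.univ.filter fun m => (p m).2 = j) ⟨m, by simpa using h⟩ id
  rw [firstSndLevel, he]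
  exact (Finset.mem_filter.mp ha).2

/-- The ranking realizing a good path `p` prefers products in decreasing order of priority: a first
component of `p` counts with the last layer at which it occurs, any other second component with the
first layer at which it occurs, and ties go to first components. -/
noncomputable def priority (p : Fin (N + 1) → α × α) (j : α) : ℕ :=
  if ∃ m, (p m).1 = j then 2 * (lastFstLevel p j : ℕ) + 2
  else if ∃ m, (p m).2 = j then 2 * (firstSndLevel p j : ℕ) + 1
  else 0

variable [DecidableEq α] {Sm : Fin (N + 1) → Finset α} {S : Finset α}

lemma IsGoodPath.priority_lt_fst (hp : IsGoodPath Sm S p) (hSm : Monotone Sm) (hj : j ∈ Sm m)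
    (hne : j ≠ (p m).1) : priority p j < priority p (p m).1 := by
  have hmL : m ≤ lastFstLevel p (p m).1 := le_lastFstLevel rfl
  have hi : priority p (p m).1 = 2 * (lastFstLevel p (p m).1 : ℕ) + 2 := if_pos ⟨m, rfl⟩
  rw [hi, priority]
  split_ifs with hfst hsnd
  · obtain ⟨a, ha⟩ := hfst
    have hL := fst_lastFstLevel ha
    have : lastFstLevel p j < m := by
      by_contra! hle
      exact hne (hL.symm.trans (hp.fst_eq_of_mem hSm hle (by rw [hL]; exact hj)))
    omega
  · obtain ⟨a, ha⟩ := hsnd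
    have hF := snd_firstSndLevel ha
    have : firstSndLevel p j ≤ m := by
      by_contra! hlt
      have h1 := hp.snd_eq_of_mem hSm hlt.le (by rw [hF]; exact hj)
      exact absurd (firstSndLevel_le (h1.symm.trans hF)) (not_le.mpr hlt)
    omega
  · omega

lemma IsGoodPath.le_priority_snd (hp : IsGoodPath Sm S p) (m : Fin (N + 1)) :
    2 * (firstSndLevel p (p m).2 : ℕ) + 1 ≤ priority p (p m).2 := by
  rw [priority]
  split_ifs with hfst hsnd
  · obtain ⟨a, ha⟩ := hfst
    have hL := fst_lastFstLevel ha
    have hsnd : (p (lastFstLevel p (p m).2)).2 = (p m).2 :=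
      (hp.snd_eq_fst _ (by rw [hL]; exact (Finset.mem_inter.mp (hp.snd_mem m)).1)).trans hL
    have := firstSndLevel_le hsnd
    omega
  · exact le_rfl
  · exact absurd ⟨m, rfl⟩ hsnd

lemma IsGoodPath.priority_lt_snd (hp : IsGoodPath Sm S p) (hSm : Monotone Sm)
    (hj : j ∈ S ∩ Sm m) (hne : j ≠ (p m).2) : priority p j < priority p (p m).2 := by
  obtain ⟨hjS, hjm⟩ := Finset.mem_inter.mp hj
  have hc_ge := hp.le_priority_snd m
  set c := (p m).2 with hc
  have hcF : c ∈ Sm (firstSndLevel p c) := by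
    have h1 := (Finset.mem_inter.mp (hp.snd_mem (firstSndLevel p c))).2
    rwa [snd_firstSndLevel (m := m) rfl] at h1
  have hlevel : ∀ b ≤ m, (p b).2 = j → b < firstSndLevel p c := by
    intro b hbm hb
    by_contra! hcb
    exact hne ((hp.snd_eq_of_mem hSm hbm (hSm hcb hcF)).trans hb).symm
  rw [priority]
  split_ifs with hfst hsnd
  · obtain ⟨a, ha⟩ := hfst
    have hL := fst_lastFstLevel ha
    have hsndL : (p (lastFstLevel p j)).2 = j := (hp.snd_eq_fst _ (by rw [hL]; exact hjS)).trans hL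
    have hLm : lastFstLevel p j ≤ m := by
      by_contra! hlt
      have h1 : (p m).1 = j :=
        (hp.fst_eq_of_mem hSm hlt.le (by rw [hL]; exact hjm)).symm.trans hL
      exact hne ((hp.snd_eq_fst m (by rw [h1]; exact hjS)).trans h1).symm
    have := hlevel _ hLm hsndL
    omega
  · obtain ⟨a, ha⟩ := hsnd
    have hF := snd_firstSndLevel ha
    have hFm : firstSndLevel p j ≤ m := by
      by_contra! hlt
      exact hne (hF.symm.trans (hp.snd_eq_of_mem hSm hlt.le (by rw [hF]; exact hjm)))
    have := hlevel _ hFm hF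
    omega
  · omega

end Realization

theorem IsGoodPath.exists_topPath_eq {n N : ℕ} {Sm : Fin (N + 1) → Finset (Fin (n + 1))}
    {S : Finset (Fin (n + 1))} {p : Fin (N + 1) → Fin (n + 1) × Fin (n + 1)}
    (hp : IsGoodPath Sm S p) (hSm : Monotone Sm) : ∃ σ, topPath Sm S σ = p := by
  obtain ⟨σ, hσ⟩ := exists_perm_le_iff (key := fun j => OrderDual.toDual (toLex (priority p j, j)))
    fun a b h => congrArg (fun x => (ofLex (OrderDual.ofDual x)).2) h
  have htop : ∀ {T i}, i ∈ T → (∀ j ∈ T, j ≠ i → priority p j < priority p i) →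
      topOf σ T = i := by
    intro T i hi hlt
    refine (isTop_iff_topOf_eq ⟨i, hi⟩).mp ⟨hi, fun j hj => (hσ i j).mpr ?_⟩
    rcases eq_or_ne j i with rfl | hne
    · exact le_rfl
    · exact OrderDual.toDual_le_toDual.mpr (Prod.Lex.toLex_le_toLex.mpr (Or.inl (hlt j hj hne)))
  refine ⟨σ, funext fun m => Prod.ext ?_ ?_⟩
  · exact htop (hp.fst_mem m) fun j hj hne => hp.priority_lt_fst hSm hj hne
  · exact htop (hp.snd_mem m) fun j hj hne => hp.priority_lt_snd hSm hj hne

section Network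

variable {n N : ℕ} {Sm : Fin (N + 1) → Finset (Fin (n + 1))} {S : Finset (Fin (n + 1))}
  {r : Fin (n + 1) → ℝ} {p : Fin (N + 1) → Fin (n + 1) × Fin (n + 1)}

lemma Bm_zero : Bm Sm 0 = Sm 0 :=
  if_pos rfl

lemma Bm_succ (m : Fin N) : Bm Sm m.succ = Sm m.succ \ Sm m.castSucc :=
  if_neg (Nat.succ_ne_zero _)

lemma isGoodPath_topPath (hSm : Monotone Sm) (hS : (S ∩ Sm 0).Nonempty)
    (σ : Equiv.Perm (Fin (n + 1))) : IsGoodPath Sm S (topPath Sm S σ) := by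
  have hne : ∀ m, (S ∩ Sm m).Nonempty := fun m =>
    hS.mono (Finset.inter_subset_inter_left (hSm (Fin.zero_le m)))
  have hne' : ∀ m, (Sm m).Nonempty := fun m => (hne m).mono Finset.inter_subset_right
  refine ⟨fun m => topOf_mem (hne' m), fun m => topOf_mem (hne m), fun m => ?_, fun m => ?_,
    fun m hm => ?_⟩
  · rw [or_iff_not_imp_right, not_not]
    exact topOf_eq_of_subset (hne' _) (hSm Fin.castSucc_lt_succ.le)
  · rw [or_iff_not_imp_right, not_not]
    intro h
    exact topOf_eq_of_subset (hne _) (Finset.inter_subset_inter_left (hSm Fin.castSucc_lt_succ.le))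
      (Finset.mem_inter.mpr ⟨(Finset.mem_inter.mp (topOf_mem (hne _))).1, h⟩)
  · exact (topOf_eq_of_subset (hne m) Finset.inter_subset_right
      (Finset.mem_inter.mpr ⟨hm, topOf_mem (hne' m)⟩)).symm

lemma IsGoodPath.vmem (hp : IsGoodPath Sm S p) (m : Fin (N + 1)) : Vmem Sm m (p m).1 (p m).2 :=
  ⟨hp.fst_mem m, (Finset.mem_inter.mp (hp.snd_mem m)).2⟩

lemma IsGoodPath.emem (hp : IsGoodPath Sm S p) (m : Fin N) :
    Emem Sm r m.castSucc (p m.castSucc).1 (p m.castSucc).2 m.succ (p m.succ).1 (p m.succ).2 := by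
  refine ⟨hp.vmem _, hp.vmem _, rfl, ?_, ?_⟩ <;> rw [Bm_succ]
  · exact (hp.fst_succ m).imp_right fun h => Finset.mem_sdiff.mpr ⟨hp.fst_mem _, h⟩
  · exact (hp.snd_succ m).imp (congrArg r) fun h =>
      ⟨_, Finset.mem_sdiff.mpr ⟨(hp.vmem _).2, h⟩, rfl⟩

lemma isGoodPath_of_emem (hr : Function.Injective r) (hV : ∀ m, Vmem Sm m (p m).1 (p m).2)
    (hE : ∀ m : Fin N,
      Emem Sm r m.castSucc (p m.castSucc).1 (p m.castSucc).2 m.succ (p m.succ).1 (p m.succ).2)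
    (hnew : ∀ m, (p m).1 ∈ S → (p m).1 ∈ Bm Sm m → (p m).2 = (p m).1)
    (hold : ∀ m, (p m).1 ∈ S → (p m).1 ∉ Bm Sm m → (p m).2 ∉ Bm Sm m)
    (hsnd : ∀ m, (p m).2 ∈ Bm Sm m → (p m).2 ∈ S) : IsGoodPath Sm S p := by
  have hfst_succ : ∀ m : Fin N, (p m.succ).1 = (p m.castSucc).1 ∨ (p m.succ).1 ∈ Bm Sm m.succ :=
    fun m => (hE m).2.2.2.1
  have hsnd_succ : ∀ m : Fin N, (p m.succ).2 = (p m.castSucc).2 ∨ (p m.succ).2 ∈ Bm Sm m.succ :=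
    fun m => (hE m).2.2.2.2.imp (fun h => hr h) fun ⟨_, hj, h⟩ => hr h ▸ hj
  have hS : ∀ m, (p m).2 ∈ S := by
    intro m
    induction m using Fin.induction with
    | zero => exact hsnd 0 (by rw [Bm_zero]; exact (hV 0).2)
    | succ m ih =>
      rcases hsnd_succ m with h | h
      · rw [h]; exact ih
      · exact hsnd _ h
  have hsnd_eq : ∀ m, (p m).1 ∈ S → (p m).2 = (p m).1 := by
    intro m
    induction m using Fin.induction with
    | zero => exact fun h0 => hnew 0 h0 (by rw [Bm_zero]; exact (hV 0).1)
    | succ m ih =>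
      intro hmS
      by_cases hB : (p m.succ).1 ∈ Bm Sm m.succ
      · exact hnew _ hmS hB
      · have hi := (hfst_succ m).resolve_right hB
        rcases hsnd_succ m with h | h
        · rw [h, ih (hi ▸ hmS), hi]
        · exact absurd h (hold _ hmS hB)
  have not_mem_of_mem_Bm : ∀ (m : Fin N) {j}, j ∈ Bm Sm m.succ → j ∉ Sm m.castSucc := fun m _ h =>
    (Finset.mem_sdiff.mp (Bm_succ (Sm := Sm) m ▸ h)).2
  exact ⟨fun m => (hV m).1, fun m => Finset.mem_inter.mpr ⟨hS m, (hV m).2⟩,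
    fun m => (hfst_succ m).imp_right (not_mem_of_mem_Bm m),
    fun m => (hsnd_succ m).imp_right (not_mem_of_mem_Bm m), hsnd_eq⟩

end Network

section Feasibility

variable {n N : ℕ} {Sm : Fin (N + 1) → Finset (Fin (n + 1))} {v : Fin (N + 1) → Fin (n + 1) → ℝ}
  {η : ℝ} {r : Fin (n + 1) → ℝ} {S : Finset (Fin (n + 1))}

variable (Sm v η r S) in
structure IsFeasibleFlow
    (f : Fin (N + 1) → Fin (n + 1) → Fin (n + 1) → Fin (n + 1) → Fin (n + 1) → ℝ)
    (g : Fin (N + 1) → Fin (n + 1) → Fin (n + 1) → ℝ) : Prop where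
  f_nonneg : ∀ (m : Fin (N + 1)) (h : (m : ℕ) + 1 < N + 1) (i k i' k' : Fin (n + 1)),
    Emem Sm r m i k ⟨(m : ℕ) + 1, h⟩ i' k' → 0 ≤ f m i k i' k'
  g_nonneg : ∀ (m : Fin (N + 1)) (i k : Fin (n + 1)), Vmem Sm m i k → 0 ≤ g m i k
  consistent : ∀ m : Fin (N + 1), ∀ i ∈ Sm m, |(∑ k ∈ Sm m, g m i k) - v m i| ≤ η
  sum_out : ∀ (m : Fin (N + 1)) (h : (m : ℕ) + 1 < N + 1) (i k : Fin (n + 1)), Vmem Sm m i k →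
    (∑ i' : Fin (n + 1), ∑ k' : Fin (n + 1),
      if Emem Sm r m i k ⟨(m : ℕ) + 1, h⟩ i' k' then f m i k i' k' else 0) = g m i k
  sum_in : ∀ m : Fin (N + 1), 1 ≤ (m : ℕ) → ∀ i k : Fin (n + 1), Vmem Sm m i k →
    (∑ i' : Fin (n + 1), ∑ k' : Fin (n + 1),
      if Emem Sm r ⟨(m : ℕ) - 1, lt_of_le_of_lt (Nat.sub_le _ _) m.isLt⟩ i' k' m i k
      then f ⟨(m : ℕ) - 1, lt_of_le_of_lt (Nat.sub_le _ _) m.isLt⟩ i' k' i k else 0) = g m i k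
  eq_zero_of_mem_Bm : ∀ (m : Fin (N + 1)) (i k : Fin (n + 1)), Vmem Sm m i k →
    i ∈ S → i ∈ Bm Sm m → r k ≠ r i → g m i k = 0
  eq_zero_of_not_mem_Bm : ∀ (m : Fin (N + 1)) (i k : Fin (n + 1)), Vmem Sm m i k →
    i ∈ S → i ∉ Bm Sm m → (∃ j ∈ Bm Sm m, r k = r j) → g m i k = 0
  eq_zero_of_snd_not_mem : ∀ (m : Fin (N + 1)) (i k : Fin (n + 1)), Vmem Sm m i k →
    (∃ j ∈ Bm Sm m \ S, r k = r j) → g m i k = 0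
  sum_last : (∑ i ∈ Sm (Fin.last N), ∑ k ∈ Sm (Fin.last N), g (Fin.last N) i k) = 1

variable (Sm r) in
noncomputable def flowObjective (g : Fin (N + 1) → Fin (n + 1) → Fin (n + 1) → ℝ) : ℝ :=
  ∑ i ∈ Sm (Fin.last N), ∑ k ∈ Sm (Fin.last N), r k * g (Fin.last N) i k

end Feasibility

section RankingFlow

variable {n N : ℕ} (Sm : Fin (N + 1) → Finset (Fin (n + 1))) (S : Finset (Fin (n + 1)))
  (lam : Equiv.Perm (Fin (n + 1)) → ℝ)

noncomputable def rankingVertexFlow (m : Fin (N + 1)) : Fin (n + 1) × Fin (n + 1) → ℝ :=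
  pushWeight (fun σ => topPath Sm S σ m) lam

noncomputable def rankingEdgeFlow (m : Fin N) :
    (Fin (n + 1) × Fin (n + 1)) × (Fin (n + 1) × Fin (n + 1)) → ℝ :=
  pushWeight (fun σ => (topPath Sm S σ m.castSucc, topPath Sm S σ m.succ)) lam

variable {Sm S lam} {r : Fin (n + 1) → ℝ} {m : Fin (N + 1)} {i k : Fin (n + 1)}

lemma mem_of_rankingVertexFlow_ne_zero (hSm : Monotone Sm) (hS : (S ∩ Sm 0).Nonempty)
    (h : rankingVertexFlow Sm S lam m (i, k) ≠ 0) : k ∈ Sm m ∧ k ∈ S ∧ (i ∈ S → k = i) := by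
  obtain ⟨σ, hσ⟩ := exists_eq_of_pushWeight_ne_zero h
  obtain ⟨rfl, rfl⟩ := Prod.ext_iff.mp hσ
  have hp := isGoodPath_topPath hSm hS σ
  exact ⟨(hp.vmem m).2, (Finset.mem_inter.mp (hp.snd_mem m)).1, hp.snd_eq_fst m⟩

lemma ite_emem_rankingEdgeFlow (hSm : Monotone Sm) (hS : (S ∩ Sm 0).Nonempty) (m : Fin N)
    (i k i' k' : Fin (n + 1)) :
    (if Emem Sm r m.castSucc i k m.succ i' k' then rankingEdgeFlow Sm S lam m ((i, k), (i', k'))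
      else 0) = rankingEdgeFlow Sm S lam m ((i, k), (i', k')) := by
  split_ifs with hE
  · rfl
  · by_contra h
    obtain ⟨σ, hσ⟩ := exists_eq_of_pushWeight_ne_zero (Ne.symm h)
    simp only [Prod.ext_iff] at hσ
    obtain ⟨⟨rfl, rfl⟩, rfl, rfl⟩ := hσ
    exact hE ((isGoodPath_topPath hSm hS σ).emem m)

lemma sum_rankingVertexFlow_eq_choiceProb (hSm : Monotone Sm) (hS : (S ∩ Sm 0).Nonempty)
    (hi : i ∈ Sm m) :
    ∑ k ∈ Sm m, rankingVertexFlow Sm S lam m (i, k) = choiceProb lam (Sm m) i := by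
  rw [Finset.sum_subset (Finset.subset_univ _) fun k _ hk => ?_]
  · exact (sum_pushWeight_mk_left _ _ _).trans (choiceProb_eq_pushWeight lam ⟨i, hi⟩).symm
  · by_contra h
    exact hk (mem_of_rankingVertexFlow_ne_zero hSm hS h).1

lemma sum_sum_rankingVertexFlow_last (hlast : Sm (Fin.last N) = Finset.univ)
    (φ : Fin (n + 1) × Fin (n + 1) → ℝ) :
    ∑ i ∈ Sm (Fin.last N), ∑ k ∈ Sm (Fin.last N),
        φ (i, k) * rankingVertexFlow Sm S lam (Fin.last N) (i, k) =
      ∑ σ, lam σ * φ (topPath Sm S σ (Fin.last N)) := by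
  rw [hlast, ← sum_pushWeight_mul (fun σ => topPath Sm S σ (Fin.last N)) lam φ,
    Fintype.sum_prod_type]
  exact Finset.sum_congr rfl fun i _ => Finset.sum_congr rfl fun k _ => mul_comm _ _
variable {v : Fin (N + 1) → Fin (n + 1) → ℝ} {η : ℝ}

theorem exists_isFeasibleFlow_of_mem_Uset (hr : Function.Injective r) (hSm : Monotone Sm)
    (hlast : Sm (Fin.last N) = Finset.univ) (hS : (S ∩ Sm 0).Nonempty)
    (hlam : lam ∈ Uset Sm v η) :
    ∃ f g, IsFeasibleFlow Sm v η r S f g ∧ flowObjective Sm r g = expRev r lam S := by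
  obtain ⟨⟨hlam0, hlam1⟩, hlamv⟩ := hlam
  refine ⟨fun m i k i' k' =>
      Fin.lastCases 0 (fun m' => rankingEdgeFlow Sm S lam m' ((i, k), (i', k'))) m,
    fun m i k => rankingVertexFlow Sm S lam m (i, k), ⟨?_, ?_, ?_, ?_, ?_, ?_, ?_, ?_, ?_⟩, ?_⟩
  · intro m h i k i' k' _
    obtain ⟨m, rfl⟩ : ∃ m' : Fin N, m'.castSucc = m := ⟨⟨m, by omega⟩, rfl⟩
    simp only [Fin.lastCases_castSucc]
    exact pushWeight_nonneg hlam0 _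
  · exact fun m i k _ => pushWeight_nonneg hlam0 _
  · intro m i hi
    rw [sum_rankingVertexFlow_eq_choiceProb hSm hS hi]
    exact hlamv m i hi
  · intro m h i k _
    obtain ⟨m, rfl⟩ : ∃ m' : Fin N, m'.castSucc = m := ⟨⟨m, by omega⟩, rfl⟩
    change ∑ i', ∑ k', (if Emem Sm r m.castSucc i k m.succ i' k' then
      Fin.lastCases (motive := fun _ => ℝ) 0
        (fun m' => rankingEdgeFlow Sm S lam m' ((i, k), (i', k'))) m.castSucc else 0) = _
    simp only [Fin.lastCases_castSucc, ite_emem_rankingEdgeFlow hSm hS]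
    exact (Fintype.sum_prod_type _).symm.trans (sum_pushWeight_mk_left _ _ _)
  · intro m hm i k _
    obtain ⟨m, rfl⟩ := Fin.exists_succ_eq.mpr (Fin.pos_iff_ne_zero.mp hm)
    change ∑ i', ∑ k', (if Emem Sm r m.castSucc i' k' m.succ i k then
      Fin.lastCases (motive := fun _ => ℝ) 0
        (fun m' => rankingEdgeFlow Sm S lam m' ((i', k'), (i, k))) m.castSucc else 0) = _
    simp only [Fin.lastCases_castSucc, ite_emem_rankingEdgeFlow hSm hS]
    exact (Fintype.sum_prod_type fun x => rankingEdgeFlow Sm S lam m (x, (i, k))).symm.trans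
      (sum_pushWeight_mk_right _ _ _)
  · intro m i k _ hiS _ hrk
    by_contra h
    exact hrk (congrArg r ((mem_of_rankingVertexFlow_ne_zero hSm hS h).2.2 hiS))
  · rintro m i k _ hiS hiB ⟨j, hjB, hrj⟩
    by_contra h
    exact hiB ((mem_of_rankingVertexFlow_ne_zero hSm hS h).2.2 hiS ▸ hr hrj ▸ hjB)
  · rintro m i k _ ⟨j, hjB, hrj⟩
    by_contra h
    exact (Finset.mem_sdiff.mp hjB).2 (hr hrj ▸ (mem_of_rankingVertexFlow_ne_zero hSm hS h).2.1)
  · simpa [hlam1] using sum_sum_rankingVertexFlow_last (S := S) (lam := lam) hlast fun _ => 1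
  · rw [flowObjective, sum_sum_rankingVertexFlow_last hlast fun x => r x.2,
      expRev_eq_sum_topOf r lam (hS.mono Finset.inter_subset_left)]
    simp only [topPath, hlast, Finset.inter_univ]

end RankingFlow

section FlowOfFeasible

variable {n N : ℕ} {Sm : Fin (N + 1) → Finset (Fin (n + 1))} {v : Fin (N + 1) → Fin (n + 1) → ℝ}
  {η : ℝ} {r : Fin (n + 1) → ℝ} {S : Finset (Fin (n + 1))}
  {f : Fin (N + 1) → Fin (n + 1) → Fin (n + 1) → Fin (n + 1) → Fin (n + 1) → ℝ}
  {g : Fin (N + 1) → Fin (n + 1) → Fin (n + 1) → ℝ}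

variable (Sm g) in
noncomputable def vertexFlow (m : Fin (N + 1)) (x : Fin (n + 1) × Fin (n + 1)) : ℝ :=
  if Vmem Sm m x.1 x.2 then g m x.1 x.2 else 0

variable (Sm r f) in
noncomputable def edgeFlow (m : Fin N) (x y : Fin (n + 1) × Fin (n + 1)) : ℝ :=
  if Emem Sm r m.castSucc x.1 x.2 m.succ y.1 y.2 then f m.castSucc x.1 x.2 y.1 y.2 else 0

lemma IsFeasibleFlow.isFlow (hfg : IsFeasibleFlow Sm v η r S f g) :
    IsFlow (vertexFlow Sm g) (edgeFlow Sm r f) := by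
  refine ⟨fun m x => ?_, fun m x y => ?_, fun m x => ?_, fun m y => ?_⟩
  · rw [vertexFlow]
    split_ifs with hV
    exacts [hfg.g_nonneg m _ _ hV, le_rfl]
  · rw [edgeFlow]
    split_ifs with hE
    exacts [hfg.f_nonneg m.castSucc m.succ.isLt _ _ _ _ hE, le_rfl]
  · rw [Fintype.sum_prod_type, vertexFlow]
    split_ifs with hV
    · exact hfg.sum_out m.castSucc m.succ.isLt x.1 x.2 hV
    · exact Finset.sum_eq_zero fun _ _ => Finset.sum_eq_zero fun _ _ => if_neg fun hE => hV hE.1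
  · rw [Fintype.sum_prod_type, vertexFlow]
    split_ifs with hV
    · exact hfg.sum_in m.succ (Nat.succ_pos _) y.1 y.2 hV
    · exact Finset.sum_eq_zero fun _ _ => Finset.sum_eq_zero fun _ _ =>
        if_neg fun hE => hV hE.2.1

lemma IsFeasibleFlow.isGoodPath (hfg : IsFeasibleFlow Sm v η r S f g) (hr : Function.Injective r)
    {p : Fin (N + 1) → Fin (n + 1) × Fin (n + 1)}
    (hp : pathWeight (vertexFlow Sm g) (edgeFlow Sm r f) p ≠ 0) : IsGoodPath Sm S p := by
  have hvert : ∀ m, Vmem Sm m (p m).1 (p m).2 ∧ g m (p m).1 (p m).2 ≠ 0 := by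
    intro m
    have h := hfg.isFlow.g_ne_zero_of_pathWeight_ne_zero hp m
    rw [vertexFlow] at h
    split_ifs at h with hV
    · exact ⟨hV, h⟩
    · exact absurd rfl h
  have hedge : ∀ m : Fin N, Emem Sm r m.castSucc (p m.castSucc).1 (p m.castSucc).2 m.succ
      (p m.succ).1 (p m.succ).2 := by
    intro m
    have h := f_ne_zero_of_pathWeight_ne_zero hp m
    rw [edgeFlow] at h
    split_ifs at h with hE
    · exact hE
    · exact absurd rfl h
  refine isGoodPath_of_emem hr (fun m => (hvert m).1) hedge (fun m hiS hiB => ?_)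
    (fun m hiS hiB hkB => (hvert m).2 (hfg.eq_zero_of_not_mem_Bm m _ _ (hvert m).1 hiS hiB
      ⟨_, hkB, rfl⟩)) (fun m hkB => ?_)
  · by_contra hne
    exact (hvert m).2 (hfg.eq_zero_of_mem_Bm m _ _ (hvert m).1 hiS hiB fun h => hne (hr h))
  · by_contra hkS
    exact (hvert m).2 (hfg.eq_zero_of_snd_not_mem m _ _ (hvert m).1
      ⟨_, Finset.mem_sdiff.mpr ⟨hkB, hkS⟩, rfl⟩)

lemma sum_vertexFlow_mul_ite_fst {m : Fin (N + 1)} {i : Fin (n + 1)} (hi : i ∈ Sm m) :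
    ∑ x, vertexFlow Sm g m x * (if x.1 = i then 1 else 0) = ∑ k ∈ Sm m, g m i k := by
  rw [Fintype.sum_prod_type, Fintype.sum_eq_single i fun j hj => by simp [hj]]
  simp [vertexFlow, Vmem, hi, Finset.sum_ite_mem]

lemma sum_vertexFlow_last_mul (hlast : Sm (Fin.last N) = Finset.univ)
    (φ : Fin (n + 1) × Fin (n + 1) → ℝ) :
    ∑ x, vertexFlow Sm g (Fin.last N) x * φ x =
      ∑ i ∈ Sm (Fin.last N), ∑ k ∈ Sm (Fin.last N), g (Fin.last N) i k * φ (i, k) := by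
  rw [hlast, Fintype.sum_prod_type]
  simp only [vertexFlow, Vmem, hlast, Finset.mem_univ, and_self, if_true]

theorem exists_mem_Uset_of_isFeasibleFlow (hr : Function.Injective r) (hSm : Monotone Sm)
    (hlast : Sm (Fin.last N) = Finset.univ) (hS : (S ∩ Sm 0).Nonempty)
    (hfg : IsFeasibleFlow Sm v η r S f g) :
    ∃ lam ∈ Uset Sm v η, expRev r lam S = flowObjective Sm r g := by
  obtain ⟨lam, hlam0, hlamw⟩ := exists_pushWeight_eq hfg.isFlow.pathWeight_nonneg
    fun p hp => (hfg.isGoodPath hr hp).exists_topPath_eq hSm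
  have hmarg : ∀ m (χ : Fin (n + 1) × Fin (n + 1) → ℝ),
      ∑ σ, lam σ * χ (topPath Sm S σ m) = ∑ x, vertexFlow Sm g m x * χ x := by
    intro m χ
    rw [← hfg.isFlow.sum_pathWeight_mul m χ, ← hlamw]
    exact (sum_pushWeight_mul _ _ fun p : Fin (N + 1) → Fin (n + 1) × Fin (n + 1) => χ (p m)).symm
  refine ⟨lam, ⟨⟨hlam0, ?_⟩, fun m i hi => ?_⟩, ?_⟩
  · have h := hmarg (Fin.last N) fun _ => 1
    simp only [mul_one] at h
    rw [h, ← hfg.sum_last]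
    simpa using sum_vertexFlow_last_mul (g := g) hlast fun _ => 1
  · have hprob : choiceProb lam (Sm m) i = ∑ k ∈ Sm m, g m i k :=
      (choiceProb_eq_sum_mul_ite lam ⟨i, hi⟩).trans
        ((hmarg m fun x => if x.1 = i then 1 else 0).trans (sum_vertexFlow_mul_ite_fst hi))
    rw [hprob]
    exact hfg.consistent m i hi
  · rw [expRev_eq_sum_topOf r lam (hS.mono Finset.inter_subset_left)]
    calc ∑ σ, lam σ * r (topOf σ S)
        = ∑ σ, lam σ * r (topPath Sm S σ (Fin.last N)).2 := by
          simp only [topPath, hlast, Finset.inter_univ]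
      _ = ∑ i ∈ Sm (Fin.last N), ∑ k ∈ Sm (Fin.last N), g (Fin.last N) i k * r k := by
          rw [hmarg _ fun x => r x.2, sum_vertexFlow_last_mul hlast]
      _ = flowObjective Sm r g :=
          Finset.sum_congr rfl fun i _ => Finset.sum_congr rfl fun k _ => mul_comm _ _

end FlowOfFeasible

/-- A vertex `(m, i, κ)` of `𝔙` is encoded as `(m, i, k)` with `κ = r k`, `k ∈ S_m` (the
revenues are distinct); `f m i k i' k'` is the flow on the edge from `(m, i, r k)` to
`(m+1, i', r k')` and `g m i k` the flow through `(m, i, r k)`. -/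
theorem statement12_general (n M : ℕ) (hM : 1 ≤ M)
    (r : Fin (n + 1) → ℝ) (hr : StrictMono r)
    (Sm : Fin M → Finset (Fin (n + 1)))
    (hnested : ∀ m m' : Fin M, m < m' → Sm m ⊂ Sm m')
    (hlastS : Sm ⟨M - 1, Nat.sub_lt hM Nat.one_pos⟩ = Finset.univ)
    (v : Fin M → Fin (n + 1) → ℝ) (η : ℝ)
    (S : Finset (Fin (n + 1))) (hS : (S ∩ Sm ⟨0, hM⟩).Nonempty) :
    wcRev Sm v η r S =
      sInf {x : ℝ |
        ∃ (f : Fin M → Fin (n + 1) → Fin (n + 1) → Fin (n + 1) → Fin (n + 1) → ℝ)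
          (g : Fin M → Fin (n + 1) → Fin (n + 1) → ℝ),
        (∀ (m : Fin M) (h : (m : ℕ) + 1 < M) (i k i' k' : Fin (n + 1)),
          Emem Sm r m i k ⟨(m : ℕ) + 1, h⟩ i' k' → 0 ≤ f m i k i' k') ∧
        (∀ (m : Fin M) (i k : Fin (n + 1)), Vmem Sm m i k → 0 ≤ g m i k) ∧
        (∀ m : Fin M, ∀ i ∈ Sm m, |(∑ k ∈ Sm m, g m i k) - v m i| ≤ η) ∧
        (∀ (m : Fin M) (h : (m : ℕ) + 1 < M) (i k : Fin (n + 1)), Vmem Sm m i k →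
          (∑ i' : Fin (n + 1), ∑ k' : Fin (n + 1),
            if Emem Sm r m i k ⟨(m : ℕ) + 1, h⟩ i' k' then f m i k i' k' else 0)
            = g m i k) ∧
        (∀ m : Fin M, 1 ≤ (m : ℕ) → ∀ i k : Fin (n + 1), Vmem Sm m i k →
          (∑ i' : Fin (n + 1), ∑ k' : Fin (n + 1),
            if Emem Sm r ⟨(m : ℕ) - 1, lt_of_le_of_lt (Nat.sub_le _ _) m.isLt⟩ i' k' m i k
            then f ⟨(m : ℕ) - 1, lt_of_le_of_lt (Nat.sub_le _ _) m.isLt⟩ i' k' i k else 0)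
            = g m i k) ∧
        (∀ (m : Fin M) (i k : Fin (n + 1)), Vmem Sm m i k →
          i ∈ S → i ∈ Bm Sm m → r k ≠ r i → g m i k = 0) ∧
        (∀ (m : Fin M) (i k : Fin (n + 1)), Vmem Sm m i k →
          i ∈ S → i ∉ Bm Sm m → (∃ j ∈ Bm Sm m, r k = r j) → g m i k = 0) ∧
        (∀ (m : Fin M) (i k : Fin (n + 1)), Vmem Sm m i k →
          (∃ j ∈ Bm Sm m \ S, r k = r j) → g m i k = 0) ∧
        (∑ i ∈ Sm ⟨M - 1, Nat.sub_lt hM Nat.one_pos⟩,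
          ∑ k ∈ Sm ⟨M - 1, Nat.sub_lt hM Nat.one_pos⟩,
            g ⟨M - 1, Nat.sub_lt hM Nat.one_pos⟩ i k) = 1 ∧
        x = ∑ i ∈ Sm ⟨M - 1, Nat.sub_lt hM Nat.one_pos⟩,
              ∑ k ∈ Sm ⟨M - 1, Nat.sub_lt hM Nat.one_pos⟩,
                r k * g ⟨M - 1, Nat.sub_lt hM Nat.one_pos⟩ i k} := by
  obtain ⟨N, rfl⟩ : ∃ N, M = N + 1 := ⟨M - 1, by omega⟩
  have hSm : Monotone Sm := StrictMono.monotone hnested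
  rw [wcRev]
  congr 1
  ext x
  constructor
  · rintro ⟨lam, hlam, rfl⟩
    obtain ⟨f, g, ⟨h1, h2, h3, h4, h5, h6, h7, h8, h9⟩, hval⟩ :=
      exists_isFeasibleFlow_of_mem_Uset hr.injective hSm hlastS hS hlam
    exact ⟨f, g, h1, h2, h3, h4, h5, h6, h7, h8, h9, hval.symm⟩
  · rintro ⟨f, g, h1, h2, h3, h4, h5, h6, h7, h8, h9, rfl⟩
    obtain ⟨lam, hlam, hval⟩ := exists_mem_Uset_of_isFeasibleFlow hr.injective hSm hlastS hS
      ⟨h1, h2, h3, h4, h5, h6, h7, h8, h9⟩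
    exact ⟨lam, hlam, hval.symm⟩

/-- Proposition 3 of the paper: for nested past assortments with `S_M = N₀`, the worst-case
expected revenue of an assortment `S` with `S ∩ S_1 ≠ ∅` is the value of a network-flow
optimization problem on the layered graph `(𝔙, 𝔈)`.  A vertex `(m, i, κ)` of `𝔙` is encoded
as `(m, i, k)` with `κ = r k`, `k ∈ S_m` (the revenues are distinct); `f m i k i' k'` is the
flow on the edge from `(m, i, r k)` to `(m+1, i', r k')` and `g m i k` the flow through
`(m, i, r k)`. -/
theorem statement12 (n M : ℕ) (hn : 1 ≤ n) (hM : 1 ≤ M)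
    (r : Fin (n + 1) → ℝ) (hr0 : r 0 = 0) (hr : StrictMono r)
    (Sm : Fin M → Finset (Fin (n + 1))) (hSm0 : ∀ m, (0 : Fin (n + 1)) ∈ Sm m)
    (hnested : ∀ m m' : Fin M, m < m' → Sm m ⊂ Sm m')
    (hlastS : Sm ⟨M - 1, Nat.sub_lt hM Nat.one_pos⟩ = Finset.univ)
    (v : Fin M → Fin (n + 1) → ℝ) (η : ℝ) (hη : 0 ≤ η)
    (hU : (Uset Sm v η).Nonempty)
    (S : Finset (Fin (n + 1))) (hS : (S ∩ Sm ⟨0, hM⟩).Nonempty) :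
    wcRev Sm v η r S =
      sInf {x : ℝ |
        ∃ (f : Fin M → Fin (n + 1) → Fin (n + 1) → Fin (n + 1) → Fin (n + 1) → ℝ)
          (g : Fin M → Fin (n + 1) → Fin (n + 1) → ℝ),
        (∀ (m : Fin M) (h : (m : ℕ) + 1 < M) (i k i' k' : Fin (n + 1)),
          Emem Sm r m i k ⟨(m : ℕ) + 1, h⟩ i' k' → 0 ≤ f m i k i' k') ∧
        (∀ (m : Fin M) (i k : Fin (n + 1)), Vmem Sm m i k → 0 ≤ g m i k) ∧
        (∀ m : Fin M, ∀ i ∈ Sm m, |(∑ k ∈ Sm m, g m i k) - v m i| ≤ η) ∧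
        (∀ (m : Fin M) (h : (m : ℕ) + 1 < M) (i k : Fin (n + 1)), Vmem Sm m i k →
          (∑ i' : Fin (n + 1), ∑ k' : Fin (n + 1),
            if Emem Sm r m i k ⟨(m : ℕ) + 1, h⟩ i' k' then f m i k i' k' else 0)
            = g m i k) ∧
        (∀ m : Fin M, 1 ≤ (m : ℕ) → ∀ i k : Fin (n + 1), Vmem Sm m i k →
          (∑ i' : Fin (n + 1), ∑ k' : Fin (n + 1),
            if Emem Sm r ⟨(m : ℕ) - 1, lt_of_le_of_lt (Nat.sub_le _ _) m.isLt⟩ i' k' m i k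
            then f ⟨(m : ℕ) - 1, lt_of_le_of_lt (Nat.sub_le _ _) m.isLt⟩ i' k' i k else 0)
            = g m i k) ∧
        (∀ (m : Fin M) (i k : Fin (n + 1)), Vmem Sm m i k →
          i ∈ S → i ∈ Bm Sm m → r k ≠ r i → g m i k = 0) ∧
        (∀ (m : Fin M) (i k : Fin (n + 1)), Vmem Sm m i k →
          i ∈ S → i ∉ Bm Sm m → (∃ j ∈ Bm Sm m, r k = r j) → g m i k = 0) ∧
        (∀ (m : Fin M) (i k : Fin (n + 1)), Vmem Sm m i k →
          (∃ j ∈ Bm Sm m \ S, r k = r j) → g m i k = 0) ∧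
        (∑ i ∈ Sm ⟨M - 1, Nat.sub_lt hM Nat.one_pos⟩,
          ∑ k ∈ Sm ⟨M - 1, Nat.sub_lt hM Nat.one_pos⟩,
            g ⟨M - 1, Nat.sub_lt hM Nat.one_pos⟩ i k) = 1 ∧
        x = ∑ i ∈ Sm ⟨M - 1, Nat.sub_lt hM Nat.one_pos⟩,
              ∑ k ∈ Sm ⟨M - 1, Nat.sub_lt hM Nat.one_pos⟩,
                r k * g ⟨M - 1, Nat.sub_lt hM Nat.one_pos⟩ i k} :=
  statement12_general n M hM r hr Sm hnested hlastS v η S hS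

end RobustAssortment
end

section
/- Let η ≥ 0 and assume the uncertainty set U_η is nonempty. Then sup_{S ∈ 𝒮} inf_{λ ∈ U_η} R^λ(S) = sup_{S ∈ 𝒮} inf_{λ ∈ U_η} R^λ(S ∩ (S_1 ∪ ⋯ ∪ S_M)). -/
namespace RobustAssortment

variable {n : ℕ}

/-- Sorting key: products in `N'` come first, ordered by `σ`. -/
def skey (N' : Finset (Fin (n + 1))) (σ : Equiv.Perm (Fin (n + 1))) (i : Fin (n + 1)) :
    Fin 2 ×ₗ Fin (n + 1) :=
  toLex (if i ∈ N' then 0 else 1, σ i)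

lemma skey_injective (N' : Finset (Fin (n + 1))) (σ : Equiv.Perm (Fin (n + 1))) :
    Function.Injective (skey N' σ) := by
  intro i j h
  have : σ i = σ j := congrArg (fun x => (ofLex x).2) h
  exact σ.injective this

lemma card_skey_image (N' : Finset (Fin (n + 1))) (σ : Equiv.Perm (Fin (n + 1))) :
    (Finset.image (skey N' σ) Finset.univ).card = n + 1 := by
  rw [Finset.card_image_of_injective _ (skey_injective N' σ), Finset.card_univ,
    Fintype.card_fin]

noncomputable def shiftFun (N' : Finset (Fin (n + 1))) (σ : Equiv.Perm (Fin (n + 1)))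
    (i : Fin (n + 1)) : Fin (n + 1) :=
  ((Finset.image (skey N' σ) Finset.univ).orderIsoOfFin (card_skey_image N' σ)).symm
    ⟨skey N' σ i, Finset.mem_image_of_mem _ (Finset.mem_univ i)⟩

lemma shiftFun_le_iff (N' : Finset (Fin (n + 1))) (σ : Equiv.Perm (Fin (n + 1)))
    (i j : Fin (n + 1)) : shiftFun N' σ i ≤ shiftFun N' σ j ↔ skey N' σ i ≤ skey N' σ j := by
  unfold shiftFun
  rw [OrderIso.le_iff_le]
  exact Subtype.mk_le_mk

lemma shiftFun_injective (N' : Finset (Fin (n + 1))) (σ : Equiv.Perm (Fin (n + 1))) :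
    Function.Injective (shiftFun N' σ) := by
  intro i j h
  apply skey_injective N' σ
  exact le_antisymm ((shiftFun_le_iff N' σ i j).1 h.le) ((shiftFun_le_iff N' σ j i).1 h.ge)

noncomputable def shift (N' : Finset (Fin (n + 1))) (σ : Equiv.Perm (Fin (n + 1))) :
    Equiv.Perm (Fin (n + 1)) :=
  Equiv.ofBijective _ (Finite.injective_iff_bijective.mp (shiftFun_injective N' σ))

lemma shift_le_iff (N' : Finset (Fin (n + 1))) (σ : Equiv.Perm (Fin (n + 1)))
    (i j : Fin (n + 1)) : shift N' σ i ≤ shift N' σ j ↔ skey N' σ i ≤ skey N' σ j :=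
  shiftFun_le_iff N' σ i j

lemma shift_le_iff_of_mem (N' : Finset (Fin (n + 1))) (σ : Equiv.Perm (Fin (n + 1)))
    {i j : Fin (n + 1)} (hi : i ∈ N') (hj : j ∈ N') :
    shift N' σ i ≤ shift N' σ j ↔ σ i ≤ σ j := by
  rw [shift_le_iff]
  simp [skey, hi, hj, Prod.Lex.le_iff]

lemma shift_lt_of_not_mem (N' : Finset (Fin (n + 1))) (σ : Equiv.Perm (Fin (n + 1)))
    {i j : Fin (n + 1)} (hi : i ∈ N') (hj : j ∉ N') :
    shift N' σ i < shift N' σ j := by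
  have h : skey N' σ i < skey N' σ j := by
    simp only [skey, hi, hj, if_true, if_false, Prod.Lex.lt_iff]
    left; exact (by decide : (0 : Fin 2) < 1)
  have h1 : shift N' σ i ≤ shift N' σ j := (shift_le_iff N' σ i j).2 h.le
  have h2 : shift N' σ i ≠ shift N' σ j := by
    intro he
    exact h.ne (le_antisymm ((shift_le_iff N' σ i j).1 he.le)
      ((shift_le_iff N' σ j i).1 he.ge))
  exact lt_of_le_of_ne h1 h2


lemma isTop_shift_iff_of_subset (N' : Finset (Fin (n + 1))) (σ : Equiv.Perm (Fin (n + 1)))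
    {T : Finset (Fin (n + 1))} (hT : T ⊆ N') (i : Fin (n + 1)) :
    isTop (shift N' σ) T i ↔ isTop σ T i := by
  unfold isTop
  constructor
  · rintro ⟨hi, h⟩
    exact ⟨hi, fun j hj => (shift_le_iff_of_mem N' σ (hT hi) (hT hj)).1 (h j hj)⟩
  · rintro ⟨hi, h⟩
    exact ⟨hi, fun j hj => (shift_le_iff_of_mem N' σ (hT hi) (hT hj)).2 (h j hj)⟩

lemma isTop_shift_iff_inter (N' : Finset (Fin (n + 1))) (σ : Equiv.Perm (Fin (n + 1)))
    {S : Finset (Fin (n + 1))} (h0S : (0 : Fin (n+1)) ∈ S) (h0N : (0 : Fin (n+1)) ∈ N')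
    {i : Fin (n + 1)} (hiS : i ∈ S) :
    isTop (shift N' σ) S i ↔ isTop σ (S ∩ N') i := by
  by_cases hiN : i ∈ N'
  · constructor
    · rintro ⟨hi, h⟩
      refine ⟨Finset.mem_inter.2 ⟨hiS, hiN⟩, fun j hj => ?_⟩
      obtain ⟨hjS, hjN⟩ := Finset.mem_inter.1 hj
      exact (shift_le_iff_of_mem N' σ hiN hjN).1 (h j hjS)
    · rintro ⟨hi, h⟩
      refine ⟨hiS, fun j hj => ?_⟩
      by_cases hjN : j ∈ N'
      · exact (shift_le_iff_of_mem N' σ hiN hjN).2 (h j (Finset.mem_inter.2 ⟨hj, hjN⟩))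
      · exact (shift_lt_of_not_mem N' σ hiN hjN).le
  · constructor
    · rintro ⟨hi, h⟩
      exact absurd (h 0 h0S) (shift_lt_of_not_mem N' σ h0N hiN).not_ge
    · rintro ⟨hi, _⟩
      exact absurd (Finset.mem_inter.1 hi).2 hiN

/-- pushforward of a weight function along `shift N'`. -/
noncomputable def pushModel (N' : Finset (Fin (n + 1))) (lam : Equiv.Perm (Fin (n + 1)) → ℝ)
    (τ : Equiv.Perm (Fin (n + 1))) : ℝ :=
  ∑ σ : Equiv.Perm (Fin (n + 1)), if shift N' σ = τ then lam σ else 0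

lemma sum_pushModel (N' : Finset (Fin (n + 1))) (lam : Equiv.Perm (Fin (n + 1)) → ℝ)
    (P : Equiv.Perm (Fin (n + 1)) → Prop) [DecidablePred P] :
    ∑ τ : Equiv.Perm (Fin (n + 1)), (if P τ then pushModel N' lam τ else 0)
      = ∑ σ : Equiv.Perm (Fin (n + 1)), if P (shift N' σ) then lam σ else 0 := by
  unfold pushModel
  have h1 : ∀ τ : Equiv.Perm (Fin (n + 1)),
      (if P τ then (∑ σ : Equiv.Perm (Fin (n + 1)), if shift N' σ = τ then lam σ else 0) else 0)
        = ∑ σ : Equiv.Perm (Fin (n + 1)),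
            if τ = shift N' σ then (if P (shift N' σ) then lam σ else 0) else 0 := by
    intro τ
    have hpull : (if P τ then (∑ σ : Equiv.Perm (Fin (n + 1)),
          if shift N' σ = τ then lam σ else 0) else 0)
        = ∑ σ : Equiv.Perm (Fin (n + 1)),
            if P τ then (if shift N' σ = τ then lam σ else 0) else 0 := by
      split_ifs <;> simp
    rw [hpull]
    refine Finset.sum_congr rfl fun σ _ => ?_
    rcases eq_or_ne (shift N' σ) τ with h | h
    · subst h; simp
    · simp [h, Ne.symm h]
  have h2 := Finset.sum_congr rfl (fun τ (_ : τ ∈ Finset.univ) => h1 τ)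
  rw [h2, Finset.sum_comm]
  refine Finset.sum_congr rfl fun σ _ => ?_
  rw [Finset.sum_ite_eq']
  simp

lemma choiceProb_nonneg {lam : Equiv.Perm (Fin (n + 1)) → ℝ} (h : ∀ σ, 0 ≤ lam σ)
    (S : Finset (Fin (n + 1))) (i : Fin (n + 1)) : 0 ≤ choiceProb lam S i :=
  Finset.sum_nonneg fun σ _ => by split_ifs; exacts [h σ, le_refl 0]

lemma choiceProb_eq_zero_of_not_mem {lam : Equiv.Perm (Fin (n + 1)) → ℝ}
    {S : Finset (Fin (n + 1))} {i : Fin (n + 1)} (hi : i ∉ S) : choiceProb lam S i = 0 :=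
  Finset.sum_eq_zero fun σ _ => if_neg (fun h => hi h.1)

lemma choiceProb_pushModel (N' : Finset (Fin (n + 1))) (lam : Equiv.Perm (Fin (n + 1)) → ℝ)
    {T : Finset (Fin (n + 1))} (hT : T ⊆ N') (i : Fin (n + 1)) :
    choiceProb (pushModel N' lam) T i = choiceProb lam T i := by
  unfold choiceProb
  rw [sum_pushModel]
  exact Finset.sum_congr rfl fun σ _ => if_congr (isTop_shift_iff_of_subset N' σ hT i) rfl rfl

lemma pushModel_mem_Uset {M : ℕ} {Sm : Fin M → Finset (Fin (n + 1))}
    {v : Fin M → Fin (n + 1) → ℝ} {η : ℝ} {N' : Finset (Fin (n + 1))}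
    (hN : ∀ m, Sm m ⊆ N') {lam : Equiv.Perm (Fin (n + 1)) → ℝ}
    (hlam : lam ∈ Uset Sm v η) : pushModel N' lam ∈ Uset Sm v η := by
  obtain ⟨⟨hpos, hsum⟩, hcons⟩ := hlam
  refine ⟨⟨fun τ => Finset.sum_nonneg fun σ _ => by split_ifs; exacts [hpos σ, le_rfl], ?_⟩, ?_⟩
  · have h := sum_pushModel N' lam (fun _ => True)
    simpa using h.trans hsum
  · intro m i hi
    rw [choiceProb_pushModel N' lam (hN m) i]
    exact hcons m i hi

lemma expRev_pushModel (N' : Finset (Fin (n + 1))) (lam : Equiv.Perm (Fin (n + 1)) → ℝ)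
    (r : Fin (n + 1) → ℝ) {S : Finset (Fin (n + 1))}
    (h0S : (0 : Fin (n + 1)) ∈ S) (h0N : (0 : Fin (n + 1)) ∈ N') :
    expRev r (pushModel N' lam) S = expRev r lam (S ∩ N') := by
  unfold expRev
  have step1 : ∀ i ∈ S,
      r i * choiceProb (pushModel N' lam) S i = r i * choiceProb lam (S ∩ N') i := by
    intro i hi
    congr 1
    unfold choiceProb
    rw [sum_pushModel]
    exact Finset.sum_congr rfl fun σ _ =>
      if_congr (isTop_shift_iff_inter N' σ h0S h0N hi) rfl rfl
  rw [Finset.sum_congr rfl step1]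
  symm
  refine Finset.sum_subset Finset.inter_subset_left fun i hiS hiI => ?_
  rw [choiceProb_eq_zero_of_not_mem hiI, mul_zero]

lemma expRev_nonneg {r : Fin (n + 1) → ℝ} (hr0 : r 0 = 0) (hr : StrictMono r)
    {lam : Equiv.Perm (Fin (n + 1)) → ℝ} (hpos : ∀ σ, 0 ≤ lam σ)
    (S : Finset (Fin (n + 1))) : 0 ≤ expRev r lam S :=
  Finset.sum_nonneg fun i _ => mul_nonneg (hr0 ▸ hr.monotone (Fin.zero_le i))
    (choiceProb_nonneg hpos S i)


/-- Proposition 4 of the paper: restricting attention to products offered in some past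
assortment does not change the optimal value of the robust optimization problem. -/
theorem statement13 (n M : ℕ) (hn : 1 ≤ n) (hM : 1 ≤ M)
    (r : Fin (n + 1) → ℝ) (hr0 : r 0 = 0) (hr : StrictMono r)
    (Sm : Fin M → Finset (Fin (n + 1))) (hSm0 : ∀ m, (0 : Fin (n + 1)) ∈ Sm m)
    (v : Fin M → Fin (n + 1) → ℝ) (η : ℝ) (hη : 0 ≤ η)
    (hU : (Uset Sm v η).Nonempty) :
    sSup {x : ℝ | ∃ S : Finset (Fin (n + 1)), 0 ∈ S ∧ x = wcRev Sm v η r S} =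
      sSup {x : ℝ | ∃ S : Finset (Fin (n + 1)), 0 ∈ S ∧
        x = wcRev Sm v η r (S ∩ Finset.univ.biUnion Sm)} := by
  set N' := Finset.univ.biUnion Sm with hN'
  have h0N : (0 : Fin (n + 1)) ∈ N' :=
    Finset.mem_biUnion.2 ⟨⟨0, hM⟩, Finset.mem_univ _, hSm0 _⟩
  have hNsub : ∀ m, Sm m ⊆ N' := fun m i hi => Finset.mem_biUnion.2 ⟨m, Finset.mem_univ m, hi⟩
  have key : ∀ S : Finset (Fin (n + 1)), (0 : Fin (n + 1)) ∈ S →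
      wcRev Sm v η r S ≤ wcRev Sm v η r (S ∩ N') := by
    intro S h0S
    unfold wcRev
    apply csInf_le_csInf
    · exact ⟨0, by rintro x ⟨lam, hlam, rfl⟩; exact expRev_nonneg hr0 hr hlam.1.1 S⟩
    · obtain ⟨lam0, hlam0⟩ := hU
      exact ⟨_, lam0, hlam0, rfl⟩
    · rintro x ⟨lam, hlam, rfl⟩
      exact ⟨pushModel N' lam, pushModel_mem_Uset hNsub hlam,
        (expRev_pushModel N' lam r h0S h0N).symm⟩
  set A := {x : ℝ | ∃ S : Finset (Fin (n + 1)), 0 ∈ S ∧ x = wcRev Sm v η r S} with hA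
  set B := {x : ℝ | ∃ S : Finset (Fin (n + 1)), 0 ∈ S ∧ x = wcRev Sm v η r (S ∩ N')} with hB
  have hBA : B ⊆ A := by
    rintro x ⟨S, h0S, rfl⟩
    exact ⟨S ∩ N', Finset.mem_inter.2 ⟨h0S, h0N⟩, rfl⟩
  have hAfin : A.Finite := (Set.finite_range (wcRev Sm v η r)).subset
    (by rintro x ⟨S, _, rfl⟩; exact ⟨S, rfl⟩)
  have hBfin : B.Finite := (Set.finite_range (wcRev Sm v η r)).subset
    (by rintro x ⟨S, _, rfl⟩; exact ⟨S ∩ N', rfl⟩)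
  have hAne : A.Nonempty := ⟨_, {0}, Finset.mem_singleton_self 0, rfl⟩
  have hBne : B.Nonempty := ⟨_, {0}, Finset.mem_singleton_self 0, rfl⟩
  apply le_antisymm
  · apply csSup_le hAne
    rintro x ⟨S, h0S, rfl⟩
    calc wcRev Sm v η r S ≤ wcRev Sm v η r (S ∩ N') := key S h0S
      _ ≤ sSup B := le_csSup hBfin.bddAbove ⟨S, h0S, rfl⟩
  · exact csSup_le_csSup hAfin.bddAbove hBne hBA


end RobustAssortment
end

section
/- Let (i_1,…,i_M) ∈ S_1 × ⋯ × S_M. Then (i_1,…,i_M) ∈ L if and only if the directed graph G_{i_1⋯i_M} is acyclic, i.e., there is no vertex x ∈ N₀ with a directed path (consisting of at least one edge) from x to itself. -/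
namespace RobustAssortment

/-- Directed edge relation of the graph `G_{i_1⋯i_M}`: an edge from `x` to `t m` for every
`m` and every `x ∈ S_m` with `x ≠ t m`. -/
def Gedge {n M : ℕ} (Sm : Fin M → Finset (Fin (n + 1)))
    (t : Fin M → Fin (n + 1)) (x y : Fin (n + 1)) : Prop :=
  ∃ m : Fin M, y = t m ∧ x ∈ Sm m ∧ x ≠ t m

lemma exists_perm_of_irrefl_trans {n : ℕ} (r : Fin (n + 1) → Fin (n + 1) → Prop)
    (htr : Transitive r) (hirr : ∀ x, ¬ r x x) :
    ∃ σ : Equiv.Perm (Fin (n + 1)), ∀ x y, r x y → σ x < σ y := by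
  classical
  let r' : Fin (n + 1) → Fin (n + 1) → Prop := fun x y => x = y ∨ r x y
  haveI : IsPartialOrder (Fin (n + 1)) r' :=
    { refl := fun x => Or.inl rfl
      trans := by
        rintro a b c (rfl | hab) (rfl | hbc)
        · exact Or.inl rfl
        · exact Or.inr hbc
        · exact Or.inr hab
        · exact Or.inr (htr hab hbc)
      antisymm := by
        rintro a b (rfl | hab) (h | hba)
        · rfl
        · rfl
        · exact h.symm
        · exact absurd (htr hab hba) (hirr a) }
  obtain ⟨s, hs, hrs⟩ := extend_partialOrder r'
  haveI := hs
  letI : DecidableRel s := fun a b => Classical.dec _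
  let l : List (Fin (n + 1)) := Finset.univ.sort s
  have hmem : ∀ x : Fin (n + 1), x ∈ l := fun x =>
    (Finset.mem_sort s).2 (Finset.mem_univ x)
  have hlen : l.length = n + 1 := by
    rw [Finset.length_sort, Finset.card_univ, Fintype.card_fin]
  have hnodup : l.Nodup := Finset.sort_nodup _ s
  have hsorted : l.Pairwise s := Finset.pairwise_sort _ s
  let g : Fin (n + 1) → Fin (n + 1) := fun x =>
    ⟨l.idxOf x, lt_of_lt_of_le (List.idxOf_lt_length_iff.2 (hmem x)) hlen.le⟩
  have hinj : Function.Injective g := by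
    intro a b hab
    have : l.idxOf a = l.idxOf b := congrArg Fin.val hab
    exact (List.idxOf_inj (hmem a) (y := b)).1 this
  refine ⟨Equiv.ofBijective g ((Finite.injective_iff_bijective).1 hinj), ?_⟩
  intro x y hxy
  have hsxy : s x y := hrs x y (Or.inr hxy)
  have hne : x ≠ y := fun h => hirr x (h ▸ hxy)
  show g x < g y
  rw [Fin.mk_lt_mk]
  rcases lt_trichotomy (l.idxOf x) (l.idxOf y) with h | h | h
  · exact h
  · exact absurd ((List.idxOf_inj (hmem x) (y := y)).1 h) hne
  · have hix : l.idxOf x < l.length := List.idxOf_lt_length_iff.2 (hmem x)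
    have hiy : l.idxOf y < l.length := List.idxOf_lt_length_iff.2 (hmem y)
    have hsyx : s (l.get ⟨l.idxOf y, hiy⟩) (l.get ⟨l.idxOf x, hix⟩) :=
      hsorted.rel_get_of_lt h
    rw [List.idxOf_get, List.idxOf_get] at hsyx
    exact absurd (antisymm hsxy hsyx) hne

/-- Lemma of Appendix A of the paper: a tuple `t ∈ S_1 × ⋯ × S_M` lies in `L` iff the
directed graph `G_{t}` is acyclic (no directed path of at least one edge from a vertex to
itself; reachability is `Relation.TransGen`). -/
theorem statement14 (n M : ℕ) (hn : 1 ≤ n) (hM : 1 ≤ M)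
    (Sm : Fin M → Finset (Fin (n + 1))) (hSm0 : ∀ m, (0 : Fin (n + 1)) ∈ Sm m)
    (t : Fin M → Fin (n + 1)) (ht : ∀ m : Fin M, t m ∈ Sm m) :
    (∃ σ : Equiv.Perm (Fin (n + 1)), ∀ m : Fin M, isTop σ (Sm m) (t m)) ↔
      ∀ x : Fin (n + 1), ¬ Relation.TransGen (Gedge Sm t) x x := by
  constructor
  · rintro ⟨σ, hσ⟩ x hx
    have key : ∀ a b, Gedge Sm t a b → σ b < σ a := by
      rintro a b ⟨m, rfl, haS, hane⟩
      exact lt_of_le_of_ne ((hσ m).2 a haS) fun h => hane (σ.injective h.symm)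
    have hdesc : ∀ a b, Relation.TransGen (Gedge Sm t) a b → σ b < σ a := by
      intro a b h
      induction h with
      | single h => exact key _ _ h
      | tail _ hstep ih => exact (key _ _ hstep).trans ih
    exact absurd (hdesc x x hx) (lt_irrefl _)
  · intro hacyc
    obtain ⟨σ, hσ⟩ := exists_perm_of_irrefl_trans
      (fun x y => Relation.TransGen (Gedge Sm t) y x)
      (fun a b c h1 h2 => h2.trans h1) (fun x h => hacyc x h)
    refine ⟨σ, fun m => ⟨ht m, fun j hj => ?_⟩⟩
    by_cases hje : j = t m
    · subst hje; exact le_rfl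
    · exact (hσ (t m) j (Relation.TransGen.single ⟨m, rfl, hj, hje⟩)).le

end RobustAssortment
end

section
/- Let (i_1,…,i_M) ∈ L and let i, j ∈ N₀ with i ≠ j. Then there exists a permutation σ of N₀ such that i_m is the σ-top of S_m for every m ∈ {1,…,M} and σ(i) < σ(j), if and only if j is not reachable from i in the directed graph G_{i_1⋯i_M}. -/
namespace RobustAssortment

/-- Membership in the set `L` of tuples of products compatible with a common ranking. -/
def memL {n M : ℕ} (Sm : Fin M → Finset (Fin (n + 1)))
    (t : Fin M → Fin (n + 1)) : Prop :=
  ∃ σ : Equiv.Perm (Fin (n + 1)), ∀ m : Fin M, isTop σ (Sm m) (t m)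

instance {n M : ℕ} (Sm : Fin M → Finset (Fin (n + 1))) (t : Fin M → Fin (n + 1)) :
    Decidable (memL Sm t) := by
  unfold memL; infer_instance
/-- Lemma of Appendix A of the paper: for `t ∈ L` and distinct products `i ≠ j`, some ranking
compatible with `t` prefers `i` to `j` iff `j` is not reachable from `i` in `G_t`. -/
theorem statement15 (n M : ℕ) (hn : 1 ≤ n) (hM : 1 ≤ M)
    (Sm : Fin M → Finset (Fin (n + 1))) (hSm0 : ∀ m, (0 : Fin (n + 1)) ∈ Sm m)
    (t : Fin M → Fin (n + 1)) (ht : memL Sm t)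
    (i j : Fin (n + 1)) (hij : i ≠ j) :
    (∃ σ : Equiv.Perm (Fin (n + 1)),
        (∀ m : Fin M, isTop σ (Sm m) (t m)) ∧ σ i < σ j) ↔
      ¬ Relation.TransGen (Gedge Sm t) i j := by
  classical
  have hedge : ∀ {σ : Equiv.Perm (Fin (n + 1))}, (∀ m, isTop σ (Sm m) (t m)) →
      ∀ {x y : Fin (n + 1)}, Gedge Sm t x y → σ y < σ x := by
    rintro σ hσ x y ⟨m, rfl, hx, hne⟩
    exact lt_of_le_of_ne ((hσ m).2 x hx) (fun h => hne (σ.injective h).symm)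
  have hpath : ∀ {σ : Equiv.Perm (Fin (n + 1))}, (∀ m, isTop σ (Sm m) (t m)) →
      ∀ {x y : Fin (n + 1)}, Relation.TransGen (Gedge Sm t) x y → σ y < σ x := by
    intro σ hσ x y h
    induction h with
    | single h => exact hedge hσ h
    | tail _ h ih => exact (hedge hσ h).trans ih
  constructor
  · rintro ⟨σ, hσ, hlt⟩ hreach
    exact absurd hlt (not_lt.2 (hpath hσ hreach).le)
  · intro hnr
    obtain ⟨σ₀, hσ₀⟩ := ht
    -- the augmented relation: `e x y` means `x` must be ranked before `y`
    set e : Fin (n + 1) → Fin (n + 1) → Prop :=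
      fun x y => Gedge Sm t y x ∨ (x = i ∧ y = j) with he
    set r : Fin (n + 1) → Fin (n + 1) → Prop := Relation.TransGen e with hr
    have hB : ∀ {x y : Fin (n + 1)}, r x y →
        Relation.TransGen (Gedge Sm t) y x ∨
          (Relation.ReflTransGen (Gedge Sm t) i x ∧
            Relation.ReflTransGen (Gedge Sm t) y j) := by
      intro x y h
      induction h with
      | single h =>
        rcases h with h | ⟨rfl, rfl⟩
        · exact Or.inl (Relation.TransGen.single h)
        · exact Or.inr ⟨Relation.ReflTransGen.refl, Relation.ReflTransGen.refl⟩
      | tail _ h ih =>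
        rcases h with h | ⟨rfl, rfl⟩
        · rcases ih with ih | ⟨h1, h2⟩
          · exact Or.inl (Relation.TransGen.head h ih)
          · exact Or.inr ⟨h1, Relation.ReflTransGen.head h h2⟩
        · rcases ih with ih | ⟨h1, _⟩
          · exact Or.inr ⟨ih.to_reflTransGen, Relation.ReflTransGen.refl⟩
          · exact Or.inr ⟨h1, Relation.ReflTransGen.refl⟩
    have hirr : ∀ a, ¬ r a a := by
      intro a ha
      rcases hB ha with h | ⟨h1, h2⟩
      · exact lt_irrefl _ (hpath hσ₀ h)
      · have hij' : Relation.ReflTransGen (Gedge Sm t) i j := h1.trans h2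
        rcases hij'.cases_head with h | ⟨c, hc, hcj⟩
        · exact hij h
        · exact hnr (Relation.TransGen.head' hc hcj)
    -- extend to a partial order, then a linear order
    set s : Fin (n + 1) → Fin (n + 1) → Prop := fun a b => r a b ∨ a = b with hs
    haveI hpo : IsPartialOrder (Fin (n + 1)) s :=
      { refl := fun a => Or.inr rfl
        trans := by
          rintro a b c (hab | rfl) (hbc | rfl)
          · exact Or.inl (hab.trans hbc)
          · exact Or.inl hab
          · exact Or.inl hbc
          · exact Or.inr rfl
        antisymm := by
          rintro a b (hab | rfl) h
          · rcases h with hba | rfl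
            · exact absurd (hab.trans hba) (hirr a)
            · rfl
          · rfl }
    obtain ⟨T, hT, hsub⟩ := extend_partialOrder s
    haveI := hT
    have hTtrans : ∀ {a b c}, T a b → T b c → T a c := fun h1 h2 => IsTrans.trans _ _ _ h1 h2
    have hTanti : ∀ {a b}, T a b → T b a → a = b := fun h1 h2 => Std.Antisymm.antisymm _ _ h1 h2
    have hTtotal : ∀ a b, T a b ∨ T b a := Std.Total.total
    -- rank function
    set f : Fin (n + 1) → ℕ :=
      fun a => (Finset.univ.filter fun b => T b a ∧ b ≠ a).card with hf
    have hfle : ∀ a, f a ≤ n := by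
      intro a
      have : (Finset.univ.filter fun b => T b a ∧ b ≠ a) ⊆ Finset.univ.erase a := by
        intro x hx
        simp only [Finset.mem_filter] at hx
        exact Finset.mem_erase.2 ⟨hx.2.2, Finset.mem_univ x⟩
      calc f a ≤ (Finset.univ.erase a).card := Finset.card_le_card this
        _ = n := by simp
    have hmono : ∀ {a b}, T a b → a ≠ b → f a < f b := by
      intro a b hab hne
      apply Finset.card_lt_card
      constructor
      · intro x hx
        simp only [Finset.mem_filter] at hx ⊢
        refine ⟨Finset.mem_univ x, hTtrans hx.2.1 hab, fun h => ?_⟩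
        subst h
        exact hne (hTanti hab hx.2.1)
      · intro hsubs
        have : a ∈ Finset.univ.filter fun b' => T b' b ∧ b' ≠ b := by
          simp only [Finset.mem_filter]
          exact ⟨Finset.mem_univ a, hab, hne⟩
        have := hsubs this
        simp only [Finset.mem_filter] at this
        exact this.2.2 rfl
    have hinj : Function.Injective f := by
      intro a b hfab
      by_contra hne
      rcases hTtotal a b with h | h
      · exact absurd hfab (Nat.ne_of_lt (hmono h hne))
      · exact absurd hfab.symm (Nat.ne_of_lt (hmono h (Ne.symm hne)))
    set g : Fin (n + 1) → Fin (n + 1) := fun a => ⟨f a, Nat.lt_succ_of_le (hfle a)⟩ with hg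
    have hginj : Function.Injective g := by
      intro a b hab
      exact hinj (by simpa [hg, Fin.mk.injEq] using hab)
    have hgbij : Function.Bijective g := Finite.injective_iff_bijective.1 hginj
    refine ⟨Equiv.ofBijective g hgbij, ?_, ?_⟩
    · intro m
      refine ⟨(hσ₀ m).1, fun x hx => ?_⟩
      by_cases hxe : x = t m
      · subst hxe; exact le_refl _
      · have hedge' : Gedge Sm t x (t m) := ⟨m, rfl, hx, hxe⟩
        have hrtx : r (t m) x := Relation.TransGen.single (Or.inl hedge')
        have hTtx : T (t m) x := hsub _ _ (Or.inl hrtx)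
        have hne : t m ≠ x := fun h => hxe h.symm
        exact le_of_lt (hmono hTtx hne)
    · have hrij : r i j := Relation.TransGen.single (Or.inr ⟨rfl, rfl⟩)
      exact hmono (hsub _ _ (Or.inl hrij)) hij

end RobustAssortment
end

section
/- Let (i_1,…,i_M) ∈ L, let S ∈ 𝒮, and let i ∈ S. Then there exists a permutation σ of N₀ such that i_m is the σ-top of S_m for every m ∈ {1,…,M} and i is the σ-top of S, if and only if no vertex j ∈ S is reachable from i in the directed graph G_{i_1⋯i_M}. -/
/-!
Every edge `x → t m` of `G_t` joins a non-top element of `S_m` to its top, so a ranking making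
each `t m` the top of `S_m` strictly decreases along edges; hence nothing reachable from `i`
can lie in `S` below `i`. Conversely, start from a ranking `σ₀` witnessing `t ∈ L` and move the
set `A` of vertices reachable from `i` (together with `i`) to the front, keeping the order of
`σ₀` inside `A` and inside its complement. Since `A` is closed under edges, every `t m` stays
the top of `S_m`, and `i` becomes the top of `S` because no other vertex of `S` lies in `A`.
-/

namespace RobustAssortment

open Relation

theorem exists_perm_le_iff_of_injective {k : ℕ} {β : Type*} [LinearOrder β] (key : Fin k → β)
    (hkey : Function.Injective key) :
    ∃ σ : Equiv.Perm (Fin k), ∀ x y, σ x ≤ σ y ↔ key x ≤ key y := by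
  classical
  set K := Finset.univ.image key
  have hK : K.card = k := by
    rw [Finset.card_image_of_injective _ hkey, Finset.card_univ, Fintype.card_fin]
  let e := K.orderIsoOfFin hK
  let f : Fin k → Fin k := fun x => e.symm ⟨key x, Finset.mem_image_of_mem _ (Finset.mem_univ x)⟩
  have hf : ∀ x y, f x ≤ f y ↔ key x ≤ key y := fun x y => e.symm.le_iff_le
  have hf_inj : Function.Injective f := fun x y h =>
    hkey (le_antisymm ((hf x y).1 h.le) ((hf y x).1 h.ge))
  exact ⟨Equiv.ofBijective f (Finite.injective_iff_bijective.mp hf_inj), hf⟩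

theorem exists_perm_prioritizing {k : ℕ} (σ₀ : Equiv.Perm (Fin k)) (A : Fin k → Prop) :
    ∃ σ : Equiv.Perm (Fin k), (∀ x y, A x → ¬ A y → σ x ≤ σ y) ∧
      ∀ x y, (A y → A x) → σ₀ x ≤ σ₀ y → σ x ≤ σ y := by
  classical
  -- `false < true` in `Bool`, so the first coordinate puts `A` in front.
  let key : Fin k → Bool ×ₗ Fin k := fun x => toLex (decide (¬ A x), σ₀ x)
  have hkey : Function.Injective key := fun x y h =>
    σ₀.injective (congrArg Prod.snd (toLex.injective h))
  obtain ⟨σ, hσ⟩ := exists_perm_le_iff_of_injective key hkey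
  refine ⟨σ, fun x y hx hy => ?_, fun x y hyx h₀ => ?_⟩
  · rw [hσ, Prod.Lex.toLex_le_toLex]
    left
    simp [hx, hy]
  · rw [hσ, Prod.Lex.toLex_le_toLex]
    by_cases hy : A y
    · exact Or.inr ⟨by simp [hy, hyx hy], h₀⟩
    · by_cases hx : A x
      · left; simp [hx, hy]
      · exact Or.inr ⟨by simp [hx, hy], h₀⟩

variable {n M : ℕ} {Sm : Fin M → Finset (Fin (n + 1))} {t : Fin M → Fin (n + 1)}

theorem lt_of_gedge {σ : Equiv.Perm (Fin (n + 1))} (hσ : ∀ m, isTop σ (Sm m) (t m))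
    {x y : Fin (n + 1)} (h : Gedge Sm t x y) : σ y < σ x := by
  obtain ⟨m, rfl, hx, hne⟩ := h
  exact ((hσ m).2 x hx).lt_of_ne fun h => hne (σ.injective h.symm)

theorem lt_of_transGen_gedge {σ : Equiv.Perm (Fin (n + 1))} (hσ : ∀ m, isTop σ (Sm m) (t m))
    {x y : Fin (n + 1)} (h : TransGen (Gedge Sm t) x y) : σ y < σ x := by
  have h' := TransGen.lift (p := (· > ·)) σ (fun _ _ => lt_of_gedge hσ) x y h
  rwa [transGen_eq_self] at h'

theorem isTop_of_prioritizing {σ₀ σ : Equiv.Perm (Fin (n + 1))} {A : Fin (n + 1) → Prop}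
    (hA : ∀ x y, Gedge Sm t x y → A x → A y)
    (hσ : ∀ x y, (A y → A x) → σ₀ x ≤ σ₀ y → σ x ≤ σ y)
    (hσ₀ : ∀ m, isTop σ₀ (Sm m) (t m)) (m : Fin M) : isTop σ (Sm m) (t m) := by
  refine ⟨(hσ₀ m).1, fun x hx => ?_⟩
  by_cases hxt : x = t m
  · rw [hxt]
  exact hσ _ _ (hA x _ ⟨m, rfl, hx, hxt⟩) ((hσ₀ m).2 x hx)

theorem statement16_general (n M : ℕ)
    (Sm : Fin M → Finset (Fin (n + 1)))
    (t : Fin M → Fin (n + 1)) (ht : memL Sm t)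
    (S : Finset (Fin (n + 1))) (i : Fin (n + 1)) (hi : i ∈ S) :
    (∃ σ : Equiv.Perm (Fin (n + 1)),
        (∀ m : Fin M, isTop σ (Sm m) (t m)) ∧ isTop σ S i) ↔
      ∀ j ∈ S, ¬ Relation.TransGen (Gedge Sm t) i j := by
  constructor
  · rintro ⟨σ, hσ, -, hiTop⟩ j hj hij
    exact (hiTop j hj).not_gt (lt_of_transGen_gedge hσ hij)
  · intro hunreach
    obtain ⟨σ₀, hσ₀⟩ := ht
    obtain ⟨σ, hfront, hkeep⟩ := exists_perm_prioritizing σ₀ (ReflTransGen (Gedge Sm t) i)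
    refine ⟨σ, isTop_of_prioritizing (fun _ _ hxy hx => hx.tail hxy) hkeep hσ₀,
      hi, fun j hj => ?_⟩
    by_cases hji : j = i
    · rw [hji]
    refine hfront i j ReflTransGen.refl fun hij => ?_
    rcases reflTransGen_iff_eq_or_transGen.mp hij with h | h
    exacts [hji h, hunreach j hj h]

/-- Lemma of Appendix A of the paper: for `t ∈ L`, `S ∈ 𝒮` and `i ∈ S`, some ranking
compatible with `t` has `i` as the top of `S` iff no vertex of `S` is reachable from `i`
in `G_t`. -/
theorem statement16 (n M : ℕ) (hn : 1 ≤ n) (hM : 1 ≤ M)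
    (Sm : Fin M → Finset (Fin (n + 1))) (hSm0 : ∀ m, (0 : Fin (n + 1)) ∈ Sm m)
    (t : Fin M → Fin (n + 1)) (ht : memL Sm t)
    (S : Finset (Fin (n + 1))) (hS : 0 ∈ S) (i : Fin (n + 1)) (hi : i ∈ S) :
    (∃ σ : Equiv.Perm (Fin (n + 1)),
        (∀ m : Fin M, isTop σ (Sm m) (t m)) ∧ isTop σ S i) ↔
      ∀ j ∈ S, ¬ Relation.TransGen (Gedge Sm t) i j :=
  statement16_general n M Sm t ht S i hi

end RobustAssortment
end

section
/- Suppose n ≥ 2 and the past assortments are the reverse revenue-ordered assortments. Let S̄ ⊆ N₀ satisfy {0, n} ⊆ S̄, and define the historical data by v_{m,n} = (1/n)·(1 + |{m,…,n−1} \ S̄|), v_{m,0} = (1/n)·|{m,…,n−1} ∩ S̄|, and v_{m,i} = 1/n for every i ∈ S_m with i ∉ {0, n}, for each m ∈ {1,…,n}. Then there is exactly one function μ : L → ℝ satisfying μ(t) ≥ 0 for all t ∈ L, Σ_{t ∈ L} μ(t) = 1, and Σ_{t ∈ L : t_m = i} μ(t) = v_{m,i} for every m ∈ {1,…,n} and every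 i ∈ S_m; and this unique solution is given, for t = (t_1,…,t_n) ∈ L, by: μ(t) = 1/n if there exists j ∈ S̄ with 1 ≤ j ≤ n−1 such that t_1 = ⋯ = t_j = 0 and t_{j+1} = ⋯ = t_n = j; μ(t) = 1/n if there exists j ∈ {1,…,n−1} with j ∉ S̄ such that t_1 = ⋯ = t_j = n and t_{j+1} = ⋯ = t_n = j; μ(t) = 1/n if t_1 = ⋯ = t_n = n; and μ(t) = 0 otherwise. -/
namespace RobustAssortment

/-! ### Auxiliary definitions -/

/-- The tuple that equals `c` before index `j` and `j` from index `j` on. -/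
def tup {n : ℕ} (c j : Fin (n + 1)) : Fin n → Fin (n + 1) :=
  fun m => if (m : ℕ) < (j : ℕ) then c else j

/-- A permutation sending `a` to `0` and `b` to `1`. -/
def perm2 {N : ℕ} (a b : Fin (N + 1)) : Equiv.Perm (Fin (N + 1)) :=
  (Equiv.swap a 0).trans (Equiv.swap ((Equiv.swap a 0) b) 1)

lemma perm2_a {N : ℕ} (a b : Fin (N + 1)) (hab : a ≠ b) (hN : 1 ≤ N) :
    perm2 a b a = 0 := by
  have h1 : (Equiv.swap a 0) a = 0 := Equiv.swap_apply_left a 0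
  have hb : (Equiv.swap a 0) b ≠ 0 := by
    intro h
    exact hab ((Equiv.swap a 0).injective (h1.trans h.symm))
  simp only [perm2, Equiv.trans_apply, h1]
  apply Equiv.swap_apply_of_ne_of_ne
  · exact fun h => hb h.symm
  · intro h
    have : (0 : Fin (N+1)).val = (1 : Fin (N+1)).val := by rw [h]
    simp [Fin.val_one'] at this
    omega

lemma perm2_b {N : ℕ} (a b : Fin (N + 1)) (hab : a ≠ b) :
    perm2 a b b = 1 := by
  simp only [perm2, Equiv.trans_apply]
  exact Equiv.swap_apply_left _ 1

lemma perm2_ne_zero {N : ℕ} (a b x : Fin (N + 1)) (hab : a ≠ b) (hN : 1 ≤ N)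
    (hx : x ≠ a) : perm2 a b x ≠ 0 := by
  intro h
  exact hx ((perm2 a b).injective (h.trans (perm2_a a b hab hN).symm))

section Struct

variable {n : ℕ} {Sm : Fin n → Finset (Fin (n + 1))}

lemma memS (hSm : ∀ m : Fin n, Sm m =
      Finset.univ.filter (fun i : Fin (n + 1) => (i : ℕ) ≤ (m : ℕ) ∨ i = Fin.last n))
    (m : Fin n) (i : Fin (n + 1)) :
    i ∈ Sm m ↔ ((i : ℕ) ≤ (m : ℕ) ∨ i = Fin.last n) := by
  rw [hSm]; simp

lemma one_le_of_ne_zero (hn : 1 ≤ n) {x : Fin (n + 1)} (hx : x ≠ 0) :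
    (1 : Fin (n + 1)) ≤ x := by
  have h1 : ((1 : Fin (n+1)) : ℕ) = 1 := by simp [Fin.val_one']; omega
  have : (x : ℕ) ≠ 0 := fun h => hx (Fin.ext (by simpa using h))
  rw [Fin.le_def, h1]; omega

/-- The tuple `tup c j` is realizable: it lies in `L`. -/
lemma memL_tup (hn : 1 ≤ n)
    (hSm : ∀ m : Fin n, Sm m =
      Finset.univ.filter (fun i : Fin (n + 1) => (i : ℕ) ≤ (m : ℕ) ∨ i = Fin.last n))
    (c j : Fin (n + 1)) (hc : c = 0 ∨ c = Fin.last n)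
    (hj1 : 1 ≤ (j : ℕ)) (hj2 : (j : ℕ) ≤ n - 1) :
    memL Sm (tup c j) := by
  have hcj : j ≠ c := by
    rcases hc with h | h <;> subst h
    · exact fun h => by have := congrArg Fin.val h; simp only [Fin.val_zero] at this; omega
    · exact fun h => by simp [Fin.ext_iff] at h; omega
  refine ⟨perm2 j c, fun m => ?_⟩
  unfold tup
  by_cases hm : (m : ℕ) < (j : ℕ)
  · rw [if_pos hm]
    constructor
    · rw [memS hSm]
      rcases hc with h | h <;> subst h
      · left; simp
      · right; rfl
    · intro i hi
      rw [memS hSm] at hi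
      have hij : i ≠ j := by
        intro h; subst h
        rcases hi with h | h
        · omega
        · rw [h] at hj2; simp [Fin.last] at hj2; omega
      rw [perm2_b j c hcj]
      exact one_le_of_ne_zero hn (perm2_ne_zero j c i hcj hn hij)
  · rw [if_neg hm]
    constructor
    · rw [memS hSm]; left; omega
    · intro i hi
      rw [perm2_a j c hcj hn]
      exact Fin.zero_le _

/-- The constant-`Fin.last n` tuple is realizable. -/
lemma memL_constLast (hSm : ∀ m : Fin n, Sm m =
      Finset.univ.filter (fun i : Fin (n + 1) => (i : ℕ) ≤ (m : ℕ) ∨ i = Fin.last n)) :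
    memL Sm (fun _ => Fin.last n) := by
  refine ⟨Equiv.swap (Fin.last n) 0, fun m => ?_⟩
  constructor
  · rw [memS hSm]; right; rfl
  · intro i hi
    rw [Equiv.swap_apply_left]
    exact Fin.zero_le _

/-- Each coordinate of a member of `L` lies in the corresponding assortment. -/
lemma mem_of_memL (hSm : ∀ m : Fin n, Sm m =
      Finset.univ.filter (fun i : Fin (n + 1) => (i : ℕ) ≤ (m : ℕ) ∨ i = Fin.last n))
    {t : Fin n → Fin (n + 1)} (ht : memL Sm t) (m : Fin n) :
    (t m : ℕ) ≤ (m : ℕ) ∨ t m = Fin.last n := by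
  obtain ⟨σ, hσ⟩ := ht
  have := (hσ m).1
  rwa [memS hSm] at this

/-- One-step structure: consecutive coordinates agree or the later one is the new product. -/
lemma step_of_memL (hSm : ∀ m : Fin n, Sm m =
      Finset.univ.filter (fun i : Fin (n + 1) => (i : ℕ) ≤ (m : ℕ) ∨ i = Fin.last n))
    {t : Fin n → Fin (n + 1)} (ht : memL Sm t) (m₁ m₂ : Fin n)
    (h12 : (m₁ : ℕ) + 1 = (m₂ : ℕ)) :
    t m₂ = t m₁ ∨ (t m₂ : ℕ) = (m₂ : ℕ) := by
  obtain ⟨σ, hσ⟩ := ht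
  by_cases hv : (t m₂ : ℕ) = (m₂ : ℕ)
  · right; exact hv
  left
  have h2 : t m₂ ∈ Sm m₁ := by
    rw [memS hSm]
    have := (hσ m₂).1
    rw [memS hSm] at this
    rcases this with h | h
    · left; omega
    · right; exact h
  have h1 : t m₁ ∈ Sm m₂ := by
    rw [memS hSm]
    have := (hσ m₁).1
    rw [memS hSm] at this
    rcases this with h | h
    · left; omega
    · right; exact h
  have le1 : σ (t m₁) ≤ σ (t m₂) := (hσ m₁).2 _ h2
  have le2 : σ (t m₂) ≤ σ (t m₁) := (hσ m₂).2 _ h1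
  exact σ.injective (le_antisymm le2 le1)

/-- Persistence: if `t m₂ = v` and `v` was already available at `m₁ ≤ m₂`, then `t m₁ = v`. -/
lemma persist (hSm : ∀ m : Fin n, Sm m =
      Finset.univ.filter (fun i : Fin (n + 1) => (i : ℕ) ≤ (m : ℕ) ∨ i = Fin.last n))
    {t : Fin n → Fin (n + 1)} (ht : memL Sm t) (m₁ m₂ : Fin n)
    (h12 : (m₁ : ℕ) ≤ (m₂ : ℕ)) {v : Fin (n + 1)}
    (hv : (v : ℕ) ≤ (m₁ : ℕ) ∨ v = Fin.last n)
    (htv : t m₂ = v) : t m₁ = v := by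
  obtain ⟨k, hk⟩ : ∃ k, (m₂ : ℕ) = (m₁ : ℕ) + k := ⟨(m₂ : ℕ) - (m₁ : ℕ), by omega⟩
  clear h12
  induction k generalizing m₂ with
  | zero =>
    have : m₁ = m₂ := Fin.ext (by omega)
    rw [this]; exact htv
  | succ k ih =>
    have hm2pos : 1 ≤ (m₂ : ℕ) := by omega
    set m₂' : Fin n := ⟨(m₂ : ℕ) - 1, by omega⟩ with hm2'
    have hstep := step_of_memL hSm ht m₂' m₂ (by simp [hm2']; omega)
    rcases hstep with h | h
    · exact ih m₂' (by rw [htv] at h; exact h.symm) (by simp [hm2']; omega)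
    · exfalso
      rw [htv] at h
      rcases hv with hv | hv
      · omega
      · rw [hv] at h
        simp [Fin.last] at h
        have : (m₂ : ℕ) < n := m₂.isLt
        omega

/-- Constancy of the prefix: if all values before index `J` are `0` or `n`, the prefix
is constant. -/
lemma prefix_const (hn : 1 ≤ n)
    (hSm : ∀ m : Fin n, Sm m =
      Finset.univ.filter (fun i : Fin (n + 1) => (i : ℕ) ≤ (m : ℕ) ∨ i = Fin.last n))
    {t : Fin n → Fin (n + 1)} (ht : memL Sm t) (J : ℕ) (hJ : J ≤ n - 1)
    (hpre : ∀ m : Fin n, (m : ℕ) < J → (t m = 0 ∨ t m = Fin.last n)) :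
    ∀ m : Fin n, (m : ℕ) < J → t m = t ⟨0, by omega⟩ := by
  intro m hm
  obtain ⟨k, hk⟩ : ∃ k, (m : ℕ) = k := ⟨(m : ℕ), rfl⟩
  induction k generalizing m with
  | zero => congr 1; exact Fin.ext hk
  | succ k ih =>
    set m' : Fin n := ⟨k, by omega⟩ with hm'
    have hstep := step_of_memL hSm ht m' m (by simp [hm']; omega)
    rcases hstep with h | h
    · rw [h]; exact ih m' (by simp [hm']; omega) (by simp [hm'])
    · exfalso
      rcases hpre m hm with h0 | h0 <;> rw [h0] at h
      · simp at h; omega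
      · simp [Fin.last] at h; omega

/-- Dichotomy: every element of `L` is constant `n`, constant `0`, a `tup`,
or has a middling coordinate different from its final coordinate. -/
lemma dichotomy (hn : 2 ≤ n)
    (hSm : ∀ m : Fin n, Sm m =
      Finset.univ.filter (fun i : Fin (n + 1) => (i : ℕ) ≤ (m : ℕ) ∨ i = Fin.last n))
    {t : Fin n → Fin (n + 1)} (ht : memL Sm t) :
    (∀ m, t m = Fin.last n) ∨ (∀ m, t m = 0) ∨
    (∃ c j : Fin (n + 1), (c = 0 ∨ c = Fin.last n) ∧ 1 ≤ (j : ℕ) ∧ (j : ℕ) ≤ n - 1 ∧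
      t = tup c j) ∨
    (∃ m : Fin n, 1 ≤ (t m : ℕ) ∧ (t m : ℕ) ≤ n - 1 ∧
      t m ≠ t ⟨n - 1, by omega⟩) := by
  set L : Fin n := ⟨n - 1, by omega⟩ with hL
  set i : Fin (n + 1) := t L with hi
  have hiS := mem_of_memL hSm ht L
  rw [← hi] at hiS
  by_cases hlast : i = Fin.last n
  · left
    intro m
    exact persist hSm ht m L (by simp [hL]; omega) (Or.inr rfl)
      (by rw [← hi]; exact hlast)
  by_cases hzero : i = 0
  · right; left
    intro m
    exact persist hSm ht m L (by simp [hL]; omega) (Or.inl (by simp [hzero]))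
      (by rw [← hi, hzero])
  -- i is a middling value
  have hival : 1 ≤ (i : ℕ) ∧ (i : ℕ) ≤ n - 1 := by
    constructor
    · by_contra h
      exact hzero (Fin.ext (by simp only [Fin.val_zero]; omega))
    · rcases hiS with h | h
      · simpa [hL] using h
      · exact absurd h hlast
  by_cases hkill : ∃ m : Fin n, 1 ≤ (t m : ℕ) ∧ (t m : ℕ) ≤ n - 1 ∧ t m ≠ t L
  · right; right; right; exact hkill
  push_neg at hkill
  right; right; left
  have hpre : ∀ m : Fin n, (m : ℕ) < (i : ℕ) → (t m = 0 ∨ t m = Fin.last n) := by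
    intro m hm
    have hmS := mem_of_memL hSm ht m
    rcases hmS with h | h
    · by_contra hcon
      push_neg at hcon
      have h1 : 1 ≤ (t m : ℕ) := by
        by_contra hh
        exact hcon.1 (Fin.ext (by simp only [Fin.val_zero]; omega))
      have h2 : (t m : ℕ) ≤ n - 1 := by
        have := (t m).isLt
        by_contra hh
        exact hcon.2 (Fin.ext (by simp only [Fin.val_last]; omega))
      have hne : t m ≠ t L := by
        intro hh
        have hval : (t m : ℕ) = (i : ℕ) := congrArg Fin.val (hh.trans hi.symm)
        omega
      exact hne (hkill m h1 h2)
    · right; exact h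
  refine ⟨t ⟨0, by omega⟩, i, ?_, hival.1, hival.2, ?_⟩
  · rcases hpre ⟨0, by omega⟩ (by show 0 < (i : ℕ); have := hival.1; omega) with h | h
    · left; exact h
    · right; exact h
  · funext m
    unfold tup
    by_cases hm : (m : ℕ) < (i : ℕ)
    · rw [if_pos hm]
      exact prefix_const (by omega) hSm ht (i : ℕ) hival.2 hpre m hm
    · rw [if_neg hm]
      exact persist hSm ht m L (by simp [hL]; omega) (Or.inl (by omega)) hi.symm

end Struct

section Spec

variable {n : ℕ}

/-- The special tuple associated with `j`. -/
def spec (Sbar : Finset (Fin (n + 1))) (j : Fin (n + 1)) : Fin n → Fin (n + 1) :=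
  if (j : ℕ) = n then (fun _ => Fin.last n)
  else if j ∈ Sbar then tup 0 j else tup (Fin.last n) j

variable {Sbar : Finset (Fin (n + 1))}

lemma zero_ne_last (hn : 1 ≤ n) : (0 : Fin (n + 1)) ≠ Fin.last n := by
  intro h
  have := congrArg Fin.val h
  simp only [Fin.val_zero, Fin.val_last] at this
  omega

lemma spec_last (hn : 1 ≤ n) (j : Fin (n + 1)) :
    spec Sbar j ⟨n - 1, by omega⟩ = j := by
  unfold spec
  by_cases hjn : (j : ℕ) = n
  · rw [if_pos hjn]; exact Fin.ext (by simp [Fin.val_last, hjn])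
  · rw [if_neg hjn]
    have hj : (j : ℕ) ≤ n - 1 := by have := j.isLt; omega
    by_cases hjs : j ∈ Sbar
    · rw [if_pos hjs]; exact if_neg (by show ¬ (n - 1 < (j : ℕ)); omega)
    · rw [if_neg hjs]; exact if_neg (by show ¬ (n - 1 < (j : ℕ)); omega)

lemma spec_eq_zero (hn : 2 ≤ n) (m : Fin n) (j : Fin (n + 1)) (hj : 1 ≤ (j : ℕ)) :
    spec Sbar j m = 0 ↔ ((m : ℕ) + 1 ≤ (j : ℕ) ∧ (j : ℕ) ≤ n - 1 ∧ j ∈ Sbar) := by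
  unfold spec
  by_cases hjn : (j : ℕ) = n
  · rw [if_pos hjn]
    constructor
    · intro h; exact absurd h.symm (zero_ne_last (by omega))
    · intro h; omega
  rw [if_neg hjn]
  have hj2 : (j : ℕ) ≤ n - 1 := by have := j.isLt; omega
  by_cases hjs : j ∈ Sbar
  · rw [if_pos hjs]
    unfold tup
    by_cases hm : (m : ℕ) < (j : ℕ)
    · rw [if_pos hm]
      simp only [eq_self_iff_true, true_iff]
      exact ⟨by omega, hj2, hjs⟩
    · rw [if_neg hm]
      constructor
      · intro h; have := congrArg Fin.val h; simp only [Fin.val_zero] at this; omega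
      · intro h; omega
  · rw [if_neg hjs]
    unfold tup
    by_cases hm : (m : ℕ) < (j : ℕ)
    · rw [if_pos hm]
      constructor
      · intro h; exact absurd h.symm (zero_ne_last (by omega))
      · intro h; exact absurd h.2.2 hjs
    · rw [if_neg hm]
      constructor
      · intro h; have := congrArg Fin.val h; simp only [Fin.val_zero] at this; omega
      · intro h; omega

lemma spec_eq_last (hn : 2 ≤ n) (m : Fin n) (j : Fin (n + 1)) (hj : 1 ≤ (j : ℕ)) :
    spec Sbar j m = Fin.last n ↔
      ((j : ℕ) = n ∨ ((m : ℕ) + 1 ≤ (j : ℕ) ∧ (j : ℕ) ≤ n - 1 ∧ j ∉ Sbar)) := by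
  unfold spec
  by_cases hjn : (j : ℕ) = n
  · rw [if_pos hjn]
    simp [hjn]
  rw [if_neg hjn]
  have hj2 : (j : ℕ) ≤ n - 1 := by have := j.isLt; omega
  have hjlast : j ≠ Fin.last n := fun h => hjn (by rw [h]; simp)
  by_cases hjs : j ∈ Sbar
  · rw [if_pos hjs]
    unfold tup
    by_cases hm : (m : ℕ) < (j : ℕ)
    · rw [if_pos hm]
      constructor
      · intro h; exact absurd h (zero_ne_last (by omega))
      · intro h
        rcases h with h | h
        · omega
        · exact absurd hjs h.2.2
    · rw [if_neg hm]
      constructor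
      · intro h; exact absurd h hjlast
      · intro h
        rcases h with h | h
        · omega
        · omega
  · rw [if_neg hjs]
    unfold tup
    by_cases hm : (m : ℕ) < (j : ℕ)
    · rw [if_pos hm]
      simp only [eq_self_iff_true, true_iff]
      right; exact ⟨by omega, hj2, hjs⟩
    · rw [if_neg hm]
      constructor
      · intro h; exact absurd h hjlast
      · intro h
        rcases h with h | h
        · omega
        · omega

lemma spec_eq_mid (hn : 2 ≤ n) (m : Fin n) (i j : Fin (n + 1))
    (hi0 : 1 ≤ (i : ℕ)) (hin : (i : ℕ) ≤ n - 1) (him : (i : ℕ) ≤ (m : ℕ))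
    (hj : 1 ≤ (j : ℕ)) :
    spec Sbar j m = i ↔ j = i := by
  have hilast : i ≠ Fin.last n := fun h => by
    have := congrArg Fin.val h; simp at this; omega
  have hizero : i ≠ 0 := fun h => by
    have := congrArg Fin.val h; simp only [Fin.val_zero] at this; omega
  unfold spec
  by_cases hjn : (j : ℕ) = n
  · rw [if_pos hjn]
    constructor
    · intro h; exact absurd h.symm hilast
    · intro h
      exfalso
      have := congrArg Fin.val h; omega
  rw [if_neg hjn]
  have hj2 : (j : ℕ) ≤ n - 1 := by have := j.isLt; omega
  by_cases hjs : j ∈ Sbar <;> [rw [if_pos hjs]; rw [if_neg hjs]] <;>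
  · unfold tup
    by_cases hm : (m : ℕ) < (j : ℕ)
    · rw [if_pos hm]
      constructor
      · intro h
        exfalso
        first
          | exact hizero h.symm
          | exact hilast h.symm
      · intro h
        exfalso
        have := congrArg Fin.val h
        omega
    · rw [if_neg hm]

lemma memL_spec (hn : 2 ≤ n) {Sm : Fin n → Finset (Fin (n + 1))}
    (hSm : ∀ m : Fin n, Sm m =
      Finset.univ.filter (fun i : Fin (n + 1) => (i : ℕ) ≤ (m : ℕ) ∨ i = Fin.last n))
    (j : Fin (n + 1)) (hj : 1 ≤ (j : ℕ)) : memL Sm (spec Sbar j) := by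
  unfold spec
  by_cases hjn : (j : ℕ) = n
  · rw [if_pos hjn]; exact memL_constLast hSm
  rw [if_neg hjn]
  have hj2 : (j : ℕ) ≤ n - 1 := by have := j.isLt; omega
  by_cases hjs : j ∈ Sbar
  · rw [if_pos hjs]; exact memL_tup (by omega) hSm 0 j (Or.inl rfl) hj hj2
  · rw [if_neg hjs]; exact memL_tup (by omega) hSm (Fin.last n) j (Or.inr rfl) hj hj2

lemma spec_inj (hn : 1 ≤ n) {j₁ j₂ : Fin (n + 1)}
    (h : spec Sbar j₁ = spec Sbar j₂) : j₁ = j₂ := by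
  have := congrFun h ⟨n - 1, by omega⟩
  rwa [spec_last hn, spec_last hn] at this

/-- The index set of the special tuples. -/
def Jset (n : ℕ) : Finset (Fin (n + 1)) :=
  Finset.univ.filter (fun j : Fin (n + 1) => 1 ≤ (j : ℕ))

lemma card_Jset (n : ℕ) : (Jset n).card = n := by
  have : Jset n = Finset.univ.erase 0 := by
    ext j
    simp only [Jset, Finset.mem_filter, Finset.mem_univ, true_and, Finset.mem_erase,
      and_true]
    constructor
    · intro h hj; rw [hj] at h; simp at h
    · intro h
      have : (j : ℕ) ≠ 0 := fun hh => h (Fin.ext (by simpa using hh))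
      omega
  rw [this, Finset.card_erase_of_mem (Finset.mem_univ _)]
  simp

end Spec

section Exist

variable {n : ℕ} {Sm : Fin n → Finset (Fin (n + 1))} {Sbar : Finset (Fin (n + 1))}

/-- The candidate solution. -/
noncomputable def mu0 (Sbar : Finset (Fin (n + 1))) : (Fin n → Fin (n + 1)) → ℝ :=
  fun t => if t ∈ (Jset n).image (spec Sbar) then (1 / (n : ℝ)) else 0

lemma mu0_nonneg (t : Fin n → Fin (n + 1)) : 0 ≤ mu0 Sbar t := by
  unfold mu0
  split
  · positivity
  · exact le_refl 0

lemma exist_sum_one (hn : 2 ≤ n)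
    (hSm : ∀ m : Fin n, Sm m =
      Finset.univ.filter (fun i : Fin (n + 1) => (i : ℕ) ≤ (m : ℕ) ∨ i = Fin.last n)) :
    (∑ t ∈ Finset.univ.filter (fun t : Fin n → Fin (n + 1) => memL Sm t), mu0 Sbar t)
      = 1 := by
  have hsub : (Jset n).image (spec Sbar) ⊆
      Finset.univ.filter (fun t : Fin n → Fin (n + 1) => memL Sm t) := by
    intro t ht
    obtain ⟨j, hj, rfl⟩ := Finset.mem_image.mp ht
    simp only [Finset.mem_filter, Finset.mem_univ, true_and]
    exact memL_spec hn hSm j (by simpa [Jset] using hj)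
  rw [← Finset.sum_subset hsub (fun t _ ht => by simp [mu0, ht])]
  have hconst : ∀ t ∈ (Jset n).image (spec Sbar), mu0 Sbar t = 1 / (n : ℝ) :=
    fun t ht => by simp [mu0, ht]
  rw [Finset.sum_congr rfl hconst, Finset.sum_const]
  rw [Finset.card_image_of_injective _ (fun a b h => spec_inj (by omega) h), card_Jset]
  have hne : (n : ℝ) ≠ 0 := by positivity
  simp only [nsmul_eq_mul]
  field_simp

lemma exist_marg (hn : 2 ≤ n)
    (hSm : ∀ m : Fin n, Sm m =
      Finset.univ.filter (fun i : Fin (n + 1) => (i : ℕ) ≤ (m : ℕ) ∨ i = Fin.last n))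
    (m : Fin n) (i : Fin (n + 1)) :
    (∑ t ∈ Finset.univ.filter
        (fun t : Fin n → Fin (n + 1) => memL Sm t ∧ t m = i), mu0 Sbar t)
      = (((Jset n).filter (fun j => spec Sbar j m = i)).card : ℝ) / n := by
  set F := ((Jset n).filter (fun j => spec Sbar j m = i)).image (spec Sbar) with hF
  have hsub : F ⊆ Finset.univ.filter
      (fun t : Fin n → Fin (n + 1) => memL Sm t ∧ t m = i) := by
    intro t ht
    obtain ⟨j, hj, rfl⟩ := Finset.mem_image.mp ht
    simp only [Finset.mem_filter, Finset.mem_univ, true_and]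
    rw [Finset.mem_filter] at hj
    exact ⟨memL_spec hn hSm j (by simpa [Jset] using hj.1), hj.2⟩
  have hvanish : ∀ t ∈ Finset.univ.filter
      (fun t : Fin n → Fin (n + 1) => memL Sm t ∧ t m = i), t ∉ F → mu0 Sbar t = 0 := by
    intro t ht htF
    rw [Finset.mem_filter] at ht
    unfold mu0
    rw [if_neg]
    intro hmem
    obtain ⟨j, hj, rfl⟩ := Finset.mem_image.mp hmem
    exact htF (Finset.mem_image.mpr ⟨j, Finset.mem_filter.mpr ⟨hj, ht.2.2⟩, rfl⟩)
  rw [← Finset.sum_subset hsub hvanish]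
  have hmu : ∀ t ∈ F, mu0 Sbar t = 1 / (n : ℝ) := by
    intro t ht
    unfold mu0
    rw [if_pos]
    obtain ⟨j, hj, rfl⟩ := Finset.mem_image.mp ht
    exact Finset.mem_image.mpr ⟨j, (Finset.mem_filter.mp hj).1, rfl⟩
  rw [Finset.sum_congr rfl hmu, Finset.sum_const]
  rw [hF, Finset.card_image_of_injective _ (fun a b h => spec_inj (by omega) h)]
  simp only [nsmul_eq_mul]
  ring

lemma cardE0 (hn : 2 ≤ n) (m : Fin n) :
    (Jset n).filter (fun j => spec Sbar j m = 0) =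
      Finset.univ.filter (fun j : Fin (n + 1) =>
        (m : ℕ) + 1 ≤ (j : ℕ) ∧ (j : ℕ) ≤ n - 1 ∧ j ∈ Sbar) := by
  ext j
  simp only [Jset, Finset.mem_filter, Finset.mem_univ, true_and]
  constructor
  · rintro ⟨hj, hsp⟩
    exact (spec_eq_zero hn m j hj).mp hsp
  · intro h
    have hj : 1 ≤ (j : ℕ) := by omega
    exact ⟨hj, (spec_eq_zero hn m j hj).mpr h⟩

lemma cardEN (hn : 2 ≤ n) (m : Fin n) :
    (Jset n).filter (fun j => spec Sbar j m = Fin.last n) =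
      insert (Fin.last n) (Finset.univ.filter (fun j : Fin (n + 1) =>
        (m : ℕ) + 1 ≤ (j : ℕ) ∧ (j : ℕ) ≤ n - 1 ∧ j ∉ Sbar)) := by
  ext j
  simp only [Jset, Finset.mem_filter, Finset.mem_univ, true_and, Finset.mem_insert]
  constructor
  · rintro ⟨hj, hsp⟩
    rcases (spec_eq_last hn m j hj).mp hsp with h | h
    · left; exact Fin.ext (by simpa using h)
    · right; exact h
  · intro h
    rcases h with h | h
    · subst h
      have hj : 1 ≤ ((Fin.last n : Fin (n + 1)) : ℕ) := by simp; omega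
      exact ⟨hj, (spec_eq_last hn m _ hj).mpr (Or.inl (by simp))⟩
    · have hj : 1 ≤ (j : ℕ) := by omega
      exact ⟨hj, (spec_eq_last hn m j hj).mpr (Or.inr h)⟩

lemma lastn_not_mem_filter (hn : 2 ≤ n) (m : Fin n) (p : Fin (n+1) → Prop)
    [DecidablePred p] :
    Fin.last n ∉ Finset.univ.filter (fun j : Fin (n + 1) =>
        (m : ℕ) + 1 ≤ (j : ℕ) ∧ (j : ℕ) ≤ n - 1 ∧ p j) := by
  simp only [Finset.mem_filter, Finset.mem_univ, true_and, Fin.val_last, not_and]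
  intro _ h
  omega

lemma cardEmid (hn : 2 ≤ n) (m : Fin n) (i : Fin (n + 1))
    (hi0 : 1 ≤ (i : ℕ)) (hin : (i : ℕ) ≤ n - 1) (him : (i : ℕ) ≤ (m : ℕ)) :
    (Jset n).filter (fun j => spec Sbar j m = i) = {i} := by
  ext j
  simp only [Jset, Finset.mem_filter, Finset.mem_univ, true_and, Finset.mem_singleton]
  constructor
  · rintro ⟨hj, hsp⟩
    exact (spec_eq_mid hn m i j hi0 hin him hj).mp hsp
  · intro h
    subst h
    exact ⟨hi0, (spec_eq_mid hn m j j hi0 hin him hi0).mpr rfl⟩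

end Exist

section Uniq

variable {n : ℕ} {Sm : Fin n → Finset (Fin (n + 1))} {Sbar : Finset (Fin (n + 1))}
  {v : Fin n → Fin (n + 1) → ℝ} {μ : (Fin n → Fin (n + 1)) → ℝ}

lemma sandwich {α : Type*} [DecidableEq α] (F1 F2 : Finset α) (f : α → ℝ)
    (hsub : F2 ⊆ F1) (hpos : ∀ x ∈ F1, 0 ≤ f x)
    (heq : (∑ x ∈ F1, f x) = ∑ x ∈ F2, f x)
    (x : α) (hx1 : x ∈ F1) (hx2 : x ∉ F2) : f x = 0 := by
  have hsum : (∑ x ∈ F1 \ F2, f x) = 0 := by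
    have := Finset.sum_sdiff (f := f) hsub
    rw [heq] at this
    linarith
  exact (Finset.sum_eq_zero_iff_of_nonneg
    (fun y hy => hpos y (Finset.mem_sdiff.mp hy).1)).mp hsum x
    (Finset.mem_sdiff.mpr ⟨hx1, hx2⟩)

lemma tup_eval_lt {c j : Fin (n + 1)} {m : Fin n} (h : (m : ℕ) < (j : ℕ)) :
    tup c j m = c := if_pos h

lemma tup_eval_ge {c j : Fin (n + 1)} {m : Fin n} (h : (j : ℕ) ≤ (m : ℕ)) :
    tup c j m = j := if_neg (by omega)

/-- Any feasible `μ` vanishes on tuples whose last coordinate is `0`. -/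
lemma vanish_last0 (hn : 2 ≤ n)
    (hSm : ∀ m : Fin n, Sm m =
      Finset.univ.filter (fun i : Fin (n + 1) => (i : ℕ) ≤ (m : ℕ) ∨ i = Fin.last n))
    (hv0 : ∀ m : Fin n, v m 0 =
      ((Finset.univ.filter (fun j : Fin (n + 1) =>
        (m : ℕ) + 1 ≤ (j : ℕ) ∧ (j : ℕ) ≤ n - 1 ∧ j ∈ Sbar)).card : ℝ) / n)
    (hpos : ∀ t, memL Sm t → 0 ≤ μ t)
    (hmarg : ∀ m : Fin n, ∀ i ∈ Sm m,
      (∑ t ∈ Finset.univ.filter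
        (fun t : Fin n → Fin (n + 1) => memL Sm t ∧ t m = i), μ t) = v m i)
    {t : Fin n → Fin (n + 1)} (ht : memL Sm t)
    (h0 : t ⟨n - 1, by omega⟩ = 0) : μ t = 0 := by
  set L : Fin n := ⟨n - 1, by omega⟩ with hL
  have h0S : (0 : Fin (n + 1)) ∈ Sm L := by
    rw [memS hSm]; left; simp
  have hsum := hmarg L 0 h0S
  rw [hv0 L] at hsum
  have hcard : (Finset.univ.filter (fun j : Fin (n + 1) =>
      (L : ℕ) + 1 ≤ (j : ℕ) ∧ (j : ℕ) ≤ n - 1 ∧ j ∈ Sbar)) = ∅ := by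
    ext j
    simp only [Finset.mem_filter, Finset.mem_univ, true_and, Finset.notMem_empty,
      iff_false, not_and]
    intro h
    have hLval : (L : ℕ) = n - 1 := rfl
    omega
  rw [hcard] at hsum
  simp only [Finset.card_empty, Nat.cast_zero, zero_div] at hsum
  exact (Finset.sum_eq_zero_iff_of_nonneg (fun y hy => by
    rw [Finset.mem_filter] at hy
    exact hpos y hy.2.1)).mp hsum t
    (Finset.mem_filter.mpr ⟨Finset.mem_univ _, ht, h0⟩)

/-- Any feasible `μ` vanishes on tuples with a middling coordinate different from the last. -/
lemma vanish_mid (hn : 2 ≤ n)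
    (hSm : ∀ m : Fin n, Sm m =
      Finset.univ.filter (fun i : Fin (n + 1) => (i : ℕ) ≤ (m : ℕ) ∨ i = Fin.last n))
    (hvmid : ∀ m : Fin n, ∀ i ∈ Sm m, i ≠ 0 → i ≠ Fin.last n → v m i = 1 / (n : ℝ))
    (hpos : ∀ t, memL Sm t → 0 ≤ μ t)
    (hmarg : ∀ m : Fin n, ∀ i ∈ Sm m,
      (∑ t ∈ Finset.univ.filter
        (fun t : Fin n → Fin (n + 1) => memL Sm t ∧ t m = i), μ t) = v m i)
    {t : Fin n → Fin (n + 1)} (ht : memL Sm t) (m : Fin n)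
    (h1 : 1 ≤ (t m : ℕ)) (h2 : (t m : ℕ) ≤ n - 1)
    (hne : t m ≠ t ⟨n - 1, by omega⟩) : μ t = 0 := by
  set L : Fin n := ⟨n - 1, by omega⟩ with hL
  set i : Fin (n + 1) := t m with hi
  have hizero : i ≠ 0 := fun h => by
    have := congrArg Fin.val h; simp only [Fin.val_zero] at this; omega
  have hilast : i ≠ Fin.last n := fun h => by
    have := congrArg Fin.val h; simp only [Fin.val_last] at this; omega
  have him : (i : ℕ) ≤ (m : ℕ) := by
    rcases mem_of_memL hSm ht m with h | h
    · exact h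
    · exact absurd h hilast
  have hiSm : i ∈ Sm m := by rw [memS hSm]; left; exact him
  have hiSL : i ∈ Sm L := by rw [memS hSm]; left; simp [hL]; omega
  have e1 := hmarg m i hiSm
  have e2 := hmarg L i hiSL
  rw [hvmid m i hiSm hizero hilast] at e1
  rw [hvmid L i hiSL hizero hilast] at e2
  set F1 := Finset.univ.filter (fun t' : Fin n → Fin (n + 1) => memL Sm t' ∧ t' m = i)
  set F2 := Finset.univ.filter (fun t' : Fin n → Fin (n + 1) => memL Sm t' ∧ t' L = i)
  have hsub : F2 ⊆ F1 := by
    intro t' ht'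
    simp only [F1, F2, Finset.mem_filter, Finset.mem_univ, true_and] at ht' ⊢
    refine ⟨ht'.1, ?_⟩
    exact persist hSm ht'.1 m L (by simp [hL]; omega) (Or.inl him) ht'.2
  refine sandwich F1 F2 μ hsub (fun y hy => by
    simp only [F1, Finset.mem_filter] at hy
    exact hpos y hy.2.1) (by rw [e1, e2]) t ?_ ?_
  · simp only [F1, Finset.mem_filter, Finset.mem_univ, true_and]
    exact ⟨ht, rfl⟩
  · simp only [F2, Finset.mem_filter, Finset.mem_univ, true_and, not_and]
    intro _
    exact fun h => hne (hi ▸ h ▸ rfl)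

lemma tup_inj (hn : 2 ≤ n) {c j₁ j₂ : Fin (n + 1)}
    (h1 : (j₁ : ℕ) ≤ n - 1) (h2 : (j₂ : ℕ) ≤ n - 1)
    (h : tup c j₁ = (tup c j₂ : Fin n → Fin (n + 1))) : j₁ = j₂ := by
  have := congrFun h ⟨n - 1, by omega⟩
  rwa [tup_eval_ge (by simp; omega), tup_eval_ge (by simp; omega)] at this

/-- The sum of the masses of the `tup 0 j'` for `j' > m` equals `v m 0`. -/
lemma sumA (hn : 2 ≤ n)
    (hSm : ∀ m : Fin n, Sm m =
      Finset.univ.filter (fun i : Fin (n + 1) => (i : ℕ) ≤ (m : ℕ) ∨ i = Fin.last n))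
    (hv0 : ∀ m : Fin n, v m 0 =
      ((Finset.univ.filter (fun j : Fin (n + 1) =>
        (m : ℕ) + 1 ≤ (j : ℕ) ∧ (j : ℕ) ≤ n - 1 ∧ j ∈ Sbar)).card : ℝ) / n)
    (hvmid : ∀ m : Fin n, ∀ i ∈ Sm m, i ≠ 0 → i ≠ Fin.last n → v m i = 1 / (n : ℝ))
    (hpos : ∀ t, memL Sm t → 0 ≤ μ t)
    (hmarg : ∀ m : Fin n, ∀ i ∈ Sm m,
      (∑ t ∈ Finset.univ.filter
        (fun t : Fin n → Fin (n + 1) => memL Sm t ∧ t m = i), μ t) = v m i)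
    (m : Fin n) :
    (∑ j' ∈ Finset.univ.filter
        (fun j' : Fin (n + 1) => (m : ℕ) + 1 ≤ (j' : ℕ) ∧ (j' : ℕ) ≤ n - 1),
      μ (tup 0 j'))
    = ((Finset.univ.filter (fun j : Fin (n + 1) =>
        (m : ℕ) + 1 ≤ (j : ℕ) ∧ (j : ℕ) ≤ n - 1 ∧ j ∈ Sbar)).card : ℝ) / n := by
  set JA := Finset.univ.filter
      (fun j' : Fin (n + 1) => (m : ℕ) + 1 ≤ (j' : ℕ) ∧ (j' : ℕ) ≤ n - 1) with hJA
  set F0 := Finset.univ.filter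
      (fun t : Fin n → Fin (n + 1) => memL Sm t ∧ t m = 0) with hF0
  have hGsub : JA.image (tup 0) ⊆ F0 := by
    intro t ht
    obtain ⟨j', hj', rfl⟩ := Finset.mem_image.mp ht
    rw [hJA, Finset.mem_filter] at hj'
    rw [hF0, Finset.mem_filter]
    refine ⟨Finset.mem_univ _, ?_, ?_⟩
    · exact memL_tup (by omega) hSm 0 j' (Or.inl rfl) (by omega) hj'.2.2
    · exact tup_eval_lt (by omega)
  have hvan : ∀ t ∈ F0, t ∉ JA.image (tup 0) → μ t = 0 := by
    intro t ht htG
    rw [hF0, Finset.mem_filter] at ht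
    obtain ⟨-, htL, htm⟩ := ht
    rcases dichotomy hn hSm htL with hall | hall | ⟨c, j', hc, hj1, hj2, rfl⟩ | hkill
    · exact absurd ((hall m).symm.trans htm).symm (zero_ne_last (by omega))
    · exact vanish_last0 hn hSm hv0 hpos hmarg htL (hall _)
    · exfalso
      apply htG
      rcases hc with rfl | rfl
      · by_cases hm : (m : ℕ) < (j' : ℕ)
        · exact Finset.mem_image.mpr ⟨j', by
            rw [hJA, Finset.mem_filter]
            exact ⟨Finset.mem_univ _, by omega, hj2⟩, rfl⟩
        · exfalso
          rw [tup_eval_ge (by omega)] at htm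
          have := congrArg Fin.val htm
          simp only [Fin.val_zero] at this
          omega
      · exfalso
        unfold tup at htm
        by_cases hm : (m : ℕ) < (j' : ℕ)
        · rw [if_pos hm] at htm
          exact zero_ne_last (by omega) htm.symm
        · rw [if_neg hm] at htm
          have := congrArg Fin.val htm
          simp only [Fin.val_zero] at this
          omega
    · obtain ⟨m', hm1, hm2, hm3⟩ := hkill
      exact vanish_mid hn hSm hvmid hpos hmarg htL m' hm1 hm2 hm3
  have h0Sm : (0 : Fin (n + 1)) ∈ Sm m := by rw [memS hSm]; left; simp
  have hsum := hmarg m 0 h0Sm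
  rw [hv0 m] at hsum
  rw [← hsum, ← Finset.sum_subset hGsub hvan]
  rw [Finset.sum_image]
  intro j₁ h₁ j₂ h₂ h
  rw [hJA, Finset.mem_coe, Finset.mem_filter] at h₁ h₂
  exact tup_inj hn h₁.2.2 h₂.2.2 h

/-- The mass of `tup 0 j`. -/
lemma massA (hn : 2 ≤ n)
    (hSm : ∀ m : Fin n, Sm m =
      Finset.univ.filter (fun i : Fin (n + 1) => (i : ℕ) ≤ (m : ℕ) ∨ i = Fin.last n))
    (hv0 : ∀ m : Fin n, v m 0 =
      ((Finset.univ.filter (fun j : Fin (n + 1) =>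
        (m : ℕ) + 1 ≤ (j : ℕ) ∧ (j : ℕ) ≤ n - 1 ∧ j ∈ Sbar)).card : ℝ) / n)
    (hvmid : ∀ m : Fin n, ∀ i ∈ Sm m, i ≠ 0 → i ≠ Fin.last n → v m i = 1 / (n : ℝ))
    (hpos : ∀ t, memL Sm t → 0 ≤ μ t)
    (hmarg : ∀ m : Fin n, ∀ i ∈ Sm m,
      (∑ t ∈ Finset.univ.filter
        (fun t : Fin n → Fin (n + 1) => memL Sm t ∧ t m = i), μ t) = v m i)
    (j : Fin (n + 1)) (hj1 : 1 ≤ (j : ℕ)) (hj2 : (j : ℕ) ≤ n - 1) :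
    μ (tup 0 j) = if j ∈ Sbar then 1 / (n : ℝ) else 0 := by
  set m1 : Fin n := ⟨(j : ℕ) - 1, by omega⟩ with hm1
  set m2 : Fin n := ⟨(j : ℕ), by omega⟩ with hm2
  have hm1v : (m1 : ℕ) = (j : ℕ) - 1 := rfl
  have hm2v : (m2 : ℕ) = (j : ℕ) := rfl
  have e1 := sumA hn hSm hv0 hvmid hpos hmarg m1
  have e2 := sumA hn hSm hv0 hvmid hpos hmarg m2
  have hJA : Finset.univ.filter
      (fun j' : Fin (n + 1) => (m1 : ℕ) + 1 ≤ (j' : ℕ) ∧ (j' : ℕ) ≤ n - 1) =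
    insert j (Finset.univ.filter
      (fun j' : Fin (n + 1) => (m2 : ℕ) + 1 ≤ (j' : ℕ) ∧ (j' : ℕ) ≤ n - 1)) := by
    ext j'
    simp only [Finset.mem_filter, Finset.mem_univ, true_and, Finset.mem_insert,
      Fin.ext_iff, hm1v, hm2v]
    omega
  have hjnot : j ∉ Finset.univ.filter
      (fun j' : Fin (n + 1) => (m2 : ℕ) + 1 ≤ (j' : ℕ) ∧ (j' : ℕ) ≤ n - 1) := by
    simp only [Finset.mem_filter, Finset.mem_univ, true_and, hm2v, not_and]
    omega
  rw [hJA, Finset.sum_insert hjnot] at e1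
  by_cases hjs : j ∈ Sbar
  · rw [if_pos hjs]
    have hS : Finset.univ.filter (fun j' : Fin (n + 1) =>
        (m1 : ℕ) + 1 ≤ (j' : ℕ) ∧ (j' : ℕ) ≤ n - 1 ∧ j' ∈ Sbar) =
      insert j (Finset.univ.filter (fun j' : Fin (n + 1) =>
        (m2 : ℕ) + 1 ≤ (j' : ℕ) ∧ (j' : ℕ) ≤ n - 1 ∧ j' ∈ Sbar)) := by
      ext j'
      simp only [Finset.mem_filter, Finset.mem_univ, true_and, Finset.mem_insert,
        hm1v, hm2v]
      constructor
      · rintro ⟨ha, hb, hc⟩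
        by_cases hj' : (j' : ℕ) = (j : ℕ)
        · left; exact Fin.ext hj'
        · right; exact ⟨by omega, hb, hc⟩
      · rintro (rfl | ⟨ha, hb, hc⟩)
        · exact ⟨by omega, hj2, hjs⟩
        · exact ⟨by omega, hb, hc⟩
    have hjnotS : j ∉ Finset.univ.filter (fun j' : Fin (n + 1) =>
        (m2 : ℕ) + 1 ≤ (j' : ℕ) ∧ (j' : ℕ) ≤ n - 1 ∧ j' ∈ Sbar) := by
      simp only [Finset.mem_filter, Finset.mem_univ, true_and, hm2v, not_and]
      omega
    rw [hS, Finset.card_insert_of_notMem hjnotS] at e1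
    rw [e2] at e1
    have hnne : (n : ℝ) ≠ 0 := by positivity
    push_cast at e1
    field_simp at e1 ⊢
    linarith
  · rw [if_neg hjs]
    have hS : Finset.univ.filter (fun j' : Fin (n + 1) =>
        (m1 : ℕ) + 1 ≤ (j' : ℕ) ∧ (j' : ℕ) ≤ n - 1 ∧ j' ∈ Sbar) =
      Finset.univ.filter (fun j' : Fin (n + 1) =>
        (m2 : ℕ) + 1 ≤ (j' : ℕ) ∧ (j' : ℕ) ≤ n - 1 ∧ j' ∈ Sbar) := by
      ext j'
      simp only [Finset.mem_filter, Finset.mem_univ, true_and, hm1v, hm2v]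
      constructor
      · rintro ⟨ha, hb, hc⟩
        by_cases hj' : (j' : ℕ) = (j : ℕ)
        · exact absurd (Fin.ext hj' ▸ hc) hjs
        · exact ⟨by omega, hb, hc⟩
      · rintro ⟨ha, hb, hc⟩
        exact ⟨by omega, hb, hc⟩
    rw [hS, e2] at e1
    linarith

/-- The masses of `tup 0 j` and `tup n j` add up to `1/n`. -/
lemma massAB (hn : 2 ≤ n)
    (hSm : ∀ m : Fin n, Sm m =
      Finset.univ.filter (fun i : Fin (n + 1) => (i : ℕ) ≤ (m : ℕ) ∨ i = Fin.last n))
    (hvmid : ∀ m : Fin n, ∀ i ∈ Sm m, i ≠ 0 → i ≠ Fin.last n → v m i = 1 / (n : ℝ))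
    (hpos : ∀ t, memL Sm t → 0 ≤ μ t)
    (hmarg : ∀ m : Fin n, ∀ i ∈ Sm m,
      (∑ t ∈ Finset.univ.filter
        (fun t : Fin n → Fin (n + 1) => memL Sm t ∧ t m = i), μ t) = v m i)
    (j : Fin (n + 1)) (hj1 : 1 ≤ (j : ℕ)) (hj2 : (j : ℕ) ≤ n - 1) :
    μ (tup 0 j) + μ (tup (Fin.last n) j) = 1 / (n : ℝ) := by
  set L : Fin n := ⟨n - 1, by omega⟩ with hL
  have hLv : (L : ℕ) = n - 1 := rfl
  have hjzero : j ≠ 0 := fun h => by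
    have := congrArg Fin.val h; simp only [Fin.val_zero] at this; omega
  have hjlast : j ≠ Fin.last n := fun h => by
    have := congrArg Fin.val h; simp only [Fin.val_last] at this; omega
  have hjS : j ∈ Sm L := by rw [memS hSm]; left; omega
  have hsum := hmarg L j hjS
  rw [hvmid L j hjS hjzero hjlast] at hsum
  have hne : tup (0 : Fin (n + 1)) j ≠ (tup (Fin.last n) j : Fin n → Fin (n + 1)) := by
    intro h
    have := congrFun h ⟨0, by omega⟩
    rw [tup_eval_lt (c := 0) (j := j) (m := ⟨0, by omega⟩) (by show 0 < (j : ℕ); omega),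
      tup_eval_lt (c := Fin.last n) (j := j) (m := ⟨0, by omega⟩) (by show 0 < (j : ℕ); omega)] at this
    exact zero_ne_last (by omega) this
  have hGsub : ({tup 0 j, tup (Fin.last n) j} : Finset (Fin n → Fin (n + 1))) ⊆
      Finset.univ.filter
        (fun t : Fin n → Fin (n + 1) => memL Sm t ∧ t L = j) := by
    intro t ht
    simp only [Finset.mem_insert, Finset.mem_singleton] at ht
    rw [Finset.mem_filter]
    rcases ht with rfl | rfl
    · exact ⟨Finset.mem_univ _, memL_tup (by omega) hSm 0 j (Or.inl rfl) hj1 hj2,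
        tup_eval_ge (by omega)⟩
    · exact ⟨Finset.mem_univ _, memL_tup (by omega) hSm _ j (Or.inr rfl) hj1 hj2,
        tup_eval_ge (by omega)⟩
  have hvan : ∀ t ∈ Finset.univ.filter
      (fun t : Fin n → Fin (n + 1) => memL Sm t ∧ t L = j),
      t ∉ ({tup 0 j, tup (Fin.last n) j} : Finset (Fin n → Fin (n + 1))) → μ t = 0 := by
    intro t ht htG
    rw [Finset.mem_filter] at ht
    obtain ⟨-, htL, htm⟩ := ht
    rcases dichotomy hn hSm htL with hall | hall | ⟨c, j', hc, hj1', hj2', rfl⟩ | hkill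
    · exact absurd ((hall L).symm.trans htm) hjlast.symm
    · exact absurd ((hall L).symm.trans htm) hjzero.symm
    · exfalso
      apply htG
      have : j' = j := by
        have := (tup_eval_ge (c := c) (j := j') (m := L) (by omega)).symm.trans htm
        exact this
      subst this
      simp only [Finset.mem_insert, Finset.mem_singleton]
      rcases hc with rfl | rfl
      · left; rfl
      · right; rfl
    · obtain ⟨m', h1', h2', h3'⟩ := hkill
      exact vanish_mid hn hSm hvmid hpos hmarg htL m' h1' h2' h3'
  rw [← Finset.sum_subset hGsub hvan] at hsum
  rwa [Finset.sum_pair hne] at hsum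

/-- The mass of the constant-`n` tuple is `1/n`. -/
lemma massC (hn : 2 ≤ n)
    (hSm : ∀ m : Fin n, Sm m =
      Finset.univ.filter (fun i : Fin (n + 1) => (i : ℕ) ≤ (m : ℕ) ∨ i = Fin.last n))
    (hvN : ∀ m : Fin n, v m (Fin.last n) =
      (1 + ((Finset.univ.filter (fun j : Fin (n + 1) =>
        (m : ℕ) + 1 ≤ (j : ℕ) ∧ (j : ℕ) ≤ n - 1 ∧ j ∉ Sbar)).card : ℝ)) / n)
    (hmarg : ∀ m : Fin n, ∀ i ∈ Sm m,
      (∑ t ∈ Finset.univ.filter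
        (fun t : Fin n → Fin (n + 1) => memL Sm t ∧ t m = i), μ t) = v m i)
    : μ (fun _ => Fin.last n) = 1 / (n : ℝ) := by
  set L : Fin n := ⟨n - 1, by omega⟩ with hL
  have hLv : (L : ℕ) = n - 1 := rfl
  have hlS : Fin.last n ∈ Sm L := by rw [memS hSm]; right; rfl
  have hsum := hmarg L (Fin.last n) hlS
  rw [hvN L] at hsum
  have hcard : (Finset.univ.filter (fun j : Fin (n + 1) =>
      (L : ℕ) + 1 ≤ (j : ℕ) ∧ (j : ℕ) ≤ n - 1 ∧ j ∉ Sbar)) = ∅ := by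
    ext j
    simp only [Finset.mem_filter, Finset.mem_univ, true_and, Finset.notMem_empty,
      iff_false, not_and]
    intro h
    omega
  rw [hcard] at hsum
  simp only [Finset.card_empty, Nat.cast_zero, add_zero] at hsum
  have hset : Finset.univ.filter
      (fun t : Fin n → Fin (n + 1) => memL Sm t ∧ t L = Fin.last n) =
      {fun _ => Fin.last n} := by
    ext t
    simp only [Finset.mem_filter, Finset.mem_univ, true_and, Finset.mem_singleton]
    constructor
    · rintro ⟨htL, hlast⟩
      funext m
      exact persist hSm htL m L (by omega) (Or.inr rfl) hlast
    · rintro rfl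
      exact ⟨memL_constLast hSm, rfl⟩
  rw [hset, Finset.sum_singleton] at hsum
  rw [hsum]

end Uniq

/-- Lemma 12 (uniqueness lemma) of the paper: with reverse revenue-ordered past assortments
(`M = n`; the `m`-th assortment, `m : Fin n`, is the paper's `S_{m+1} = {0,…,m} ∪ {n}`) and
the given historical data built from `S̄`, the feasibility system on `L` has a unique
solution, given in closed form.  (The paper's tuple entry `t_m`, `m ∈ {1,…,n}`, is `t ⟨m-1⟩`
here.) -/
theorem statement19 (n : ℕ) (hn : 2 ≤ n)
    (Sm : Fin n → Finset (Fin (n + 1)))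
    (hSm : ∀ m : Fin n, Sm m =
      Finset.univ.filter (fun i : Fin (n + 1) => (i : ℕ) ≤ (m : ℕ) ∨ i = Fin.last n))
    (Sbar : Finset (Fin (n + 1))) (h0 : (0 : Fin (n + 1)) ∈ Sbar)
    (hl : Fin.last n ∈ Sbar)
    (v : Fin n → Fin (n + 1) → ℝ)
    (hvN : ∀ m : Fin n, v m (Fin.last n) =
      (1 + ((Finset.univ.filter (fun j : Fin (n + 1) =>
        (m : ℕ) + 1 ≤ (j : ℕ) ∧ (j : ℕ) ≤ n - 1 ∧ j ∉ Sbar)).card : ℝ)) / n)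
    (hv0 : ∀ m : Fin n, v m 0 =
      ((Finset.univ.filter (fun j : Fin (n + 1) =>
        (m : ℕ) + 1 ≤ (j : ℕ) ∧ (j : ℕ) ≤ n - 1 ∧ j ∈ Sbar)).card : ℝ) / n)
    (hvmid : ∀ m : Fin n, ∀ i ∈ Sm m, i ≠ 0 → i ≠ Fin.last n → v m i = 1 / (n : ℝ)) :
    (∃ μ : (Fin n → Fin (n + 1)) → ℝ,
      (∀ t, memL Sm t → 0 ≤ μ t) ∧
      (∑ t ∈ Finset.univ.filter (fun t : Fin n → Fin (n + 1) => memL Sm t), μ t) = 1 ∧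
      (∀ m : Fin n, ∀ i ∈ Sm m,
        (∑ t ∈ Finset.univ.filter
          (fun t : Fin n → Fin (n + 1) => memL Sm t ∧ t m = i), μ t) = v m i)) ∧
    (∀ μ : (Fin n → Fin (n + 1)) → ℝ,
      ((∀ t, memL Sm t → 0 ≤ μ t) ∧
       (∑ t ∈ Finset.univ.filter (fun t : Fin n → Fin (n + 1) => memL Sm t), μ t) = 1 ∧
       (∀ m : Fin n, ∀ i ∈ Sm m,
         (∑ t ∈ Finset.univ.filter
           (fun t : Fin n → Fin (n + 1) => memL Sm t ∧ t m = i), μ t) = v m i)) →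
      ∀ t : Fin n → Fin (n + 1), memL Sm t →
        μ t =
          if ((∃ j : Fin (n + 1), j ∈ Sbar ∧ 1 ≤ (j : ℕ) ∧ (j : ℕ) ≤ n - 1 ∧
                ∀ m : Fin n, ((m : ℕ) < (j : ℕ) → t m = 0) ∧
                  ((j : ℕ) ≤ (m : ℕ) → t m = j)) ∨
              (∃ j : Fin (n + 1), j ∉ Sbar ∧ 1 ≤ (j : ℕ) ∧ (j : ℕ) ≤ n - 1 ∧
                ∀ m : Fin n, ((m : ℕ) < (j : ℕ) → t m = Fin.last n) ∧
                  ((j : ℕ) ≤ (m : ℕ) → t m = j)) ∨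
              (∀ m : Fin n, t m = Fin.last n))
          then 1 / (n : ℝ) else 0) := by
  constructor
  · -- Existence
    refine ⟨mu0 Sbar, fun t _ => mu0_nonneg t, exist_sum_one hn hSm, ?_⟩
    intro m i hi
    rw [exist_marg hn hSm m i]
    by_cases hi0 : i = 0
    · subst hi0
      rw [cardE0 hn m, hv0 m]
    by_cases hil : i = Fin.last n
    · subst hil
      rw [cardEN hn m, Finset.card_insert_of_notMem (lastn_not_mem_filter hn m _),
        hvN m]
      push_cast
      ring
    · have hiv : (i : ℕ) ≤ (m : ℕ) := by
        rcases (memS hSm m i).mp hi with h | h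
        · exact h
        · exact absurd h hil
      have hi1 : 1 ≤ (i : ℕ) := by
        by_contra h
        exact hi0 (Fin.ext (by simp only [Fin.val_zero]; omega))
      have hi2 : (i : ℕ) ≤ n - 1 := by
        have := i.isLt
        by_contra h
        exact hil (Fin.ext (by simp only [Fin.val_last]; omega))
      rw [cardEmid hn m i hi1 hi2 hiv, hvmid m i hi hi0 hil]
      simp
  · -- Uniqueness
    rintro μ ⟨hpos, hsum1, hmarg⟩ t htL
    set L : Fin n := ⟨n - 1, by omega⟩ with hLdef
    have hLv : (L : ℕ) = n - 1 := rfl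
    rcases dichotomy hn hSm htL with hall | hall | ⟨c, j, hc, hj1, hj2, rfl⟩ | hkill
    · -- constant n
      rw [if_pos (Or.inr (Or.inr hall))]
      have : t = fun _ => Fin.last n := funext hall
      rw [this]
      exact massC hn hSm hvN hmarg
    · -- constant 0
      rw [if_neg]
      · exact vanish_last0 hn hSm hv0 hpos hmarg htL (hall L)
      rintro (⟨j, hjS, hj1, hj2, hj⟩ | ⟨j, hjS, hj1, hj2, hj⟩ | hconst)
      · have h1 := (hj L).2 (by omega)
        have h2 := hall L
        rw [h2] at h1
        have := congrArg Fin.val h1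
        simp only [Fin.val_zero] at this
        omega
      · have h1 := (hj L).2 (by omega)
        have h2 := hall L
        rw [h2] at h1
        have := congrArg Fin.val h1
        simp only [Fin.val_zero] at this
        omega
      · have := (hconst L).symm.trans (hall L)
        have := congrArg Fin.val this
        simp only [Fin.val_last, Fin.val_zero] at this
        omega
    · -- tup c j
      have htupL : tup c j L = j := tup_eval_ge (by omega)
      have htup0 : tup c j ⟨0, by omega⟩ = c := tup_eval_lt (by show 0 < (j : ℕ); omega)
      rcases hc with rfl | rfl
      · by_cases hjs : j ∈ Sbar
        · rw [if_pos (Or.inl ⟨j, hjs, hj1, hj2,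
            fun m => ⟨fun h => tup_eval_lt h, fun h => tup_eval_ge h⟩⟩)]
          rw [massA hn hSm hv0 hvmid hpos hmarg j hj1 hj2, if_pos hjs]
        · rw [if_neg, massA hn hSm hv0 hvmid hpos hmarg j hj1 hj2, if_neg hjs]
          rintro (⟨j', hj'S, h1', h2', hj'⟩ | ⟨j', hj'S, h1', h2', hj'⟩ | hconst)
          · have h1 := (hj' L).2 (by omega)
            rw [htupL] at h1
            exact hjs (h1 ▸ hj'S)
          · have h1 := (hj' L).2 (by omega)
            rw [htupL] at h1
            have h2 := (hj' ⟨0, by omega⟩).1 (by show 0 < (j' : ℕ); omega)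
            rw [htup0] at h2
            exact zero_ne_last (by omega) h2
          · have := hconst L
            rw [htupL] at this
            have := congrArg Fin.val this
            simp only [Fin.val_last] at this
            omega
      · have hA := massA hn hSm hv0 hvmid hpos hmarg j hj1 hj2
        have hAB := massAB hn hSm hvmid hpos hmarg j hj1 hj2
        by_cases hjs : j ∈ Sbar
        · rw [if_neg]
          · rw [if_pos hjs] at hA
            linarith
          rintro (⟨j', hj'S, h1', h2', hj'⟩ | ⟨j', hj'S, h1', h2', hj'⟩ | hconst)
          · have h2 := (hj' ⟨0, by omega⟩).1 (by show 0 < (j' : ℕ); omega)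
            rw [htup0] at h2
            exact zero_ne_last (by omega) h2.symm
          · have h1 := (hj' L).2 (by omega)
            rw [htupL] at h1
            exact hj'S (h1 ▸ hjs)
          · have := hconst L
            rw [htupL] at this
            have := congrArg Fin.val this
            simp only [Fin.val_last] at this
            omega
        · rw [if_pos (Or.inr (Or.inl ⟨j, hjs, hj1, hj2,
            fun m => ⟨fun h => tup_eval_lt h, fun h => tup_eval_ge h⟩⟩))]
          rw [if_neg hjs] at hA
          linarith
    · -- kill case
      obtain ⟨m', h1', h2', h3'⟩ := hkill
      rw [if_neg]
      · exact vanish_mid hn hSm hvmid hpos hmarg htL m' h1' h2' h3'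
      rintro (⟨j, hjS, hj1, hj2, hj⟩ | ⟨j, hjS, hj1, hj2, hj⟩ | hconst)
      · by_cases hm : (m' : ℕ) < (j : ℕ)
        · have := (hj m').1 hm
          have := congrArg Fin.val this
          simp only [Fin.val_zero] at this
          omega
        · have ha := (hj m').2 (by omega)
          have hb := (hj L).2 (by omega)
          exact h3' (ha.trans hb.symm)
      · by_cases hm : (m' : ℕ) < (j : ℕ)
        · have := (hj m').1 hm
          have := congrArg Fin.val this
          simp only [Fin.val_last] at this
          omega
        · have ha := (hj m').2 (by omega)
          have hb := (hj L).2 (by omega)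
          exact h3' (ha.trans hb.symm)
      · have := congrArg Fin.val (hconst m')
        simp only [Fin.val_last] at this
        omega

end RobustAssortment
end
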